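/- arXiv:2109.06584 — 8 statements merged into one kernel-verified Lean document; each statement's English description precedes it below -/
import Mathlib

section
/- Characterization of unary unbiased variation operators: Let D be a probability distribution on [0..n] and let V_D be the unary variation operator which, for each x ∈ {0,1}^n, generates V_D(x) by first sampling a number k from D and then flipping k bits of x chosen uniformly at random (a uniformly random k-element subset of positions). Then V_D is a unary unbiased variation operator. Conversely, for every unary unbiased variation operator V on {0,1}^n there exists a probability distribution D_V on [0..n] such that V = V_{D_V}. -/
/-!
Both invariances together say exactly that `V x y` depends only on the Hamming distance
`d(x, y)`: xor with `x` moves `x` to `0`, and permutations act transitively on the strings of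
a given weight. The operator `V_D` has this property, since `V_D x y = D(d) / C(n, d)` with
`d = d(x, y)`. Conversely, an unbiased `V` equals `V_D` for `D` the law of the weight of a
sample of `V 0`, because the `C(n, d)` strings at distance `d` from `x` are equally likely.
-/

/-- A unary variation operator `V` (assigning to each bit string a distribution on
bit strings) is *unbiased* if it is invariant under XOR with any fixed string and
under permutations of the bit positions. -/
def IsUnbiased {n : ℕ} (V : (Fin n → Bool) → PMF (Fin n → Bool)) : Prop :=
  (∀ x z y : Fin n → Bool,
      V x y = V (fun i => xor (x i) (z i)) (fun i => xor (y i) (z i))) ∧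
  (∀ (x : Fin n → Bool) (σ : Equiv.Perm (Fin n)) (y : Fin n → Bool),
      V x y = V (x ∘ σ) (y ∘ σ))

/-- Flip the bits of `x` at the positions in the set `A`. -/
def flipSet {n : ℕ} (x : Fin n → Bool) (A : Finset (Fin n)) : Fin n → Bool :=
  fun i => if i ∈ A then !(x i) else x i

/-- The unary variation operator `V_D` associated with a distribution `D` on
`[0..n]`: on input `x`, sample `k` from `D`, then flip the bits of `x` in a
uniformly random `k`-element set of positions. -/
noncomputable def VD {n : ℕ} (D : PMF (Fin (n + 1))) :
    (Fin n → Bool) → PMF (Fin n → Bool) :=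
  fun x => D.bind fun k =>
    (PMF.uniformOfFinset ((Finset.univ : Finset (Fin n)).powersetCard (k : ℕ))
      (Finset.powersetCard_nonempty.mpr (by
        simpa [Finset.card_univ] using Fin.is_le k))).map (flipSet x)

open Finset
open scoped ENNReal

section Hamming

variable {ι β : Type*} [Fintype ι] [DecidableEq β]

lemma hammingDist_comp_perm (x y : ι → β) (σ : Equiv.Perm ι) :
    hammingDist (x ∘ σ) (y ∘ σ) = hammingDist x y :=
  card_equiv σ (by simp)

lemma hammingDist_xor (x y z : ι → Bool) :
    hammingDist (fun i => xor (x i) (z i)) (fun i => xor (y i) (z i)) = hammingDist x y :=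
  hammingDist_comp (fun i b => xor b (z i)) fun i a b h => by
    cases a <;> cases b <;> cases z i <;> simp_all

end Hamming

variable {n : ℕ}

lemma hammingDist_le (x y : Fin n → Bool) : hammingDist x y ≤ n :=
  hammingDist_le_card_fintype.trans_eq (Fintype.card_fin n)

def hammingDistFin (x y : Fin n → Bool) : Fin (n + 1) :=
  ⟨hammingDist x y, Nat.lt_succ_of_le (hammingDist_le x y)⟩

@[simp]
lemma val_hammingDistFin (x y : Fin n → Bool) : (hammingDistFin x y : ℕ) = hammingDist x y :=
  rfl

lemma flipSet_eq_iff {x y : Fin n → Bool} {A : Finset (Fin n)} :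
    flipSet x A = y ↔ A = ({i | x i ≠ y i} : Finset (Fin n)) := by
  constructor
  · rintro rfl
    ext i
    by_cases h : i ∈ A <;> simp [flipSet, h]
  · rintro rfl
    funext i
    cases hx : x i <;> cases hy : y i <;> simp [flipSet, hx, hy]

lemma filter_ne_flipSet (x : Fin n → Bool) (A : Finset (Fin n)) :
    ({i | x i ≠ flipSet x A i} : Finset (Fin n)) = A :=
  (flipSet_eq_iff.1 rfl).symm

lemma hammingDist_flipSet (x : Fin n → Bool) (A : Finset (Fin n)) :
    hammingDist x (flipSet x A) = #A :=
  congrArg card (filter_ne_flipSet x A)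

lemma card_hammingDist_eq (x : Fin n → Bool) (k : ℕ) :
    #{y | hammingDist x y = k} = n.choose k :=
  calc #{y | hammingDist x y = k}
      = #(powersetCard k (univ : Finset (Fin n))) := by
        refine card_nbij' (fun y => ({i | x i ≠ y i} : Finset (Fin n))) (flipSet x) ?_ ?_ ?_ ?_
        · intro y hy
          simpa [hammingDist] using hy
        · intro A hA
          simpa [hammingDist_flipSet] using hA
        · intro y _
          exact flipSet_eq_iff.2 rfl
        · intro A _
          exact filter_ne_flipSet x A
    _ = n.choose k := by simp

lemma map_flipSet_uniformOfFinset_apply (x y : Fin n → Bool) (k : ℕ)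
    (h : (powersetCard k (univ : Finset (Fin n))).Nonempty) :
    (PMF.uniformOfFinset _ h).map (flipSet x) y =
      if hammingDist x y = k then ((n.choose k : ℝ≥0∞))⁻¹ else 0 := by
  rw [PMF.map_apply, tsum_eq_single ({i | x i ≠ y i} : Finset (Fin n))]
  · rw [if_pos (flipSet_eq_iff.2 rfl).symm]
    simp [PMF.uniformOfFinset_apply, hammingDist]
  · intro A hA
    rw [if_neg fun h => hA (flipSet_eq_iff.1 h.symm)]

lemma VD_apply (D : PMF (Fin (n + 1))) (x y : Fin n → Bool) :
    VD D x y = D (hammingDistFin x y) * ((n.choose (hammingDist x y) : ℝ≥0∞))⁻¹ := by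
  rw [VD, PMF.bind_apply, tsum_eq_single (hammingDistFin x y)]
  · rw [map_flipSet_uniformOfFinset_apply, val_hammingDistFin, if_pos rfl]
  · intro k hk
    rw [map_flipSet_uniformOfFinset_apply, if_neg (fun h => hk (Fin.ext h.symm)), mul_zero]

section Unbiased

variable {V : (Fin n → Bool) → PMF (Fin n → Bool)}

lemma IsUnbiased.apply_eq_apply_false
    (hV : IsUnbiased V) (x y : Fin n → Bool) :
    V x y = V (fun _ => false) (fun i => xor (y i) (x i)) := by
  simpa using hV.1 x x y

lemma IsUnbiased.apply_false_eq_of_hammingDist_eq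
    (hV : IsUnbiased V) {y y' : Fin n → Bool}
    (h : hammingDist (fun _ => false) y = hammingDist (fun _ => false) y') :
    V (fun _ => false) y = V (fun _ => false) y' := by
  obtain ⟨σ, hσ⟩ := Equiv.Perm.exists_map_finset_eq _ _ h.symm
  -- `σ` maps the support of `y'` onto that of `y`
  have hy : y ∘ σ = y' := by
    funext i
    have hi := mem_map' σ.toEmbedding (a := i) (s := {i | false ≠ y' i})
    rw [hσ] at hi
    cases hyi : y (σ i) <;> cases hy'i : y' i <;> simp_all
  rw [hV.2 _ σ, ← hy]
  rfl

theorem isUnbiased_iff_hammingDist :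
    IsUnbiased V ↔
      ∀ x y x' y', hammingDist x y = hammingDist x' y' → V x y = V x' y' := by
  constructor
  · intro hV x y x' y' h
    have hdist : ∀ x y : Fin n → Bool,
        hammingDist x y = hammingDist (fun _ => false) (fun i => xor (y i) (x i)) := by
      intro x y
      simpa using (hammingDist_xor x y x).symm
    rw [hV.apply_eq_apply_false, hV.apply_eq_apply_false x']
    exact hV.apply_false_eq_of_hammingDist_eq (by rw [← hdist, ← hdist, h])
  · intro hV
    exact ⟨fun x z y => hV _ _ _ _ (hammingDist_xor x y z).symm,
      fun x σ y => hV _ _ _ _ (hammingDist_comp_perm x y σ).symm⟩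

theorem isUnbiased_VD (D : PMF (Fin (n + 1))) : IsUnbiased (VD D) :=
  isUnbiased_iff_hammingDist.2 fun x y x' y' h => by
    rw [VD_apply, VD_apply, h, show hammingDistFin x y = hammingDistFin x' y' from Fin.ext h]

lemma IsUnbiased.map_hammingDistFin_apply
    (hV : IsUnbiased V) (x₀ x y : Fin n → Bool) :
    (V x₀).map (hammingDistFin x₀) (hammingDistFin x y) =
      n.choose (hammingDist x y) * V x y := by
  calc (V x₀).map (hammingDistFin x₀) (hammingDistFin x y)
      = ∑ y' with hammingDist x₀ y' = hammingDist x y, V x₀ y' := by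
        simp [PMF.map_apply, sum_filter, Fin.ext_iff, eq_comm]
    _ = ∑ y' with hammingDist x₀ y' = hammingDist x y, V x y :=
        sum_congr rfl fun y' hy' => isUnbiased_iff_hammingDist.1 hV _ _ _ _ (mem_filter.1 hy').2
    _ = n.choose (hammingDist x y) * V x y := by
        rw [sum_const, card_hammingDist_eq, nsmul_eq_mul]

theorem IsUnbiased.eq_VD (hV : IsUnbiased V) :
    V = VD ((V fun _ => false).map (hammingDistFin fun _ => false)) := by
  ext x y
  have hchoose : (n.choose (hammingDist x y) : ℝ≥0∞) ≠ 0 :=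
    Nat.cast_ne_zero.2 (Nat.choose_pos (hammingDist_le x y)).ne'
  rw [VD_apply, hV.map_hammingDistFin_apply, mul_comm,
    ENNReal.inv_mul_cancel_left hchoose (by simp)]

end Unbiased

/-- **Characterization of unary unbiased variation operators.**
For every distribution `D` on `[0..n]`, the operator `V_D` (sample `k ∼ D`, flip a
uniformly random `k`-element set of bit positions) is unary unbiased; conversely,
every unary unbiased variation operator `V` on `{0,1}^n` is of the form `V_{D}`
for some distribution `D` on `[0..n]`. -/
theorem unary_unbiased_characterization (n : ℕ) :
    (∀ D : PMF (Fin (n + 1)), IsUnbiased (VD D)) ∧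
    (∀ V : (Fin n → Bool) → PMF (Fin n → Bool), IsUnbiased V →
      ∃ D : PMF (Fin (n + 1)), V = VD D) :=
  ⟨fun D => isUnbiased_VD D, fun _ hV => ⟨_, hV.eq_VD⟩⟩
end

section
/- Let n be an even positive integer, m ∈ [0..n/2−1] an integer, and δ ∈ [0,2]. Let x be a random bit string in {0,1}^n such that x_i = 1 deterministically for all i ∈ [1..2m+2] and such that the bits x_i, i ∈ [2m+3..n], are independent and uniformly distributed in {0,1}. Then E[HLB_δ(x)] ≤ 2m + 4. -/
/-- Number of leading ones among positions `0, …, n-1` of `x : ℕ → Bool`. -/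
def LOn (n : ℕ) (x : ℕ → Bool) : ℕ :=
  ((Finset.range n).filter (fun r => ∀ s ≤ r, x s = true)).card

/-- The DeceivingLeadingBlocks function (0-based encoding of bit positions):
blocks are `(x (2ℓ), x (2ℓ+1))`; if `x` is not the all-ones string and `m` is the
index of the first non-`11` block, then the value is `2m+1` for a `00` critical
block, `2m` for a `01`/`10` critical block, and `n` for the all-ones string. -/
def DLBn (n : ℕ) (x : ℕ → Bool) : ℕ :=
  if ∀ i < n, x i = true then n
  else if x (2 * (LOn n x / 2)) = false ∧ x (2 * (LOn n x / 2) + 1) = false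
    then 2 * (LOn n x / 2) + 1
    else 2 * (LOn n x / 2)

/-- The Honest Leading Blocks function with parameter `δ`:
`HLB_δ(x) = 2m` if `DLB(x) = 2m+1`, `HLB_δ(x) = 2m+2-δ` if `DLB(x) = 2m` (for
`m ∈ [0..n/2-1]`), and `HLB_δ(x) = n` if `DLB(x) = n`. -/
noncomputable def HLBn (n : ℕ) (δ : ℝ) (x : ℕ → Bool) : ℝ :=
  if ∀ i < n, x i = true then (n : ℝ)
  else if x (2 * (LOn n x / 2)) = false ∧ x (2 * (LOn n x / 2) + 1) = false
    then (2 * (LOn n x / 2) : ℕ)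
    else (2 * (LOn n x / 2) : ℕ) + 2 - δ

/-- Extend a bit string `x : Fin n → Bool` to all of `ℕ` (by `false` outside). -/
def toNatFun {n : ℕ} (x : Fin n → Bool) : ℕ → Bool :=
  fun i => if h : i < n then x ⟨i, h⟩ else false

/-- The LeadingOnes value of a bit string of length `n`. -/
def LO {n : ℕ} (x : Fin n → Bool) : ℕ := LOn n (toNatFun x)

/-- The DeceivingLeadingBlocks value of a bit string of length `n`. -/
def DLB {n : ℕ} (x : Fin n → Bool) : ℕ := DLBn n (toNatFun x)

/-- The Honest Leading Blocks value (parameter `δ`) of a bit string of length `n`. -/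
noncomputable def HLB {n : ℕ} (δ : ℝ) (x : Fin n → Bool) : ℝ := HLBn n δ (toNatFun x)

/-!
Write `E(a)` for the expectation of `HLB_δ` when the first `a` bits (`a` even) are forced to `1`
and the rest are uniform. The block `(a, a+1)` is `00` with probability `1/4`, giving `HLB = a`;
it is `01` or `10` with probability `1/2`, giving `a + 2 - δ ≤ a + 2`; and it is `11` with
probability `1/4`, which is the situation of `E(a+2)`. Hence
`E(a) ≤ a/4 + (a+2)/2 + E(a+2)/4`, and downward induction from `a + 1 ≥ n`, where
`HLB ≤ a + 2` holds pointwise, gives `E(a) ≤ a + 2`.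
-/

open Function

def fillOnes {n : ℕ} (a : ℕ) (u : Fin n → Bool) : Fin n → Bool :=
  fun i => if (i : ℕ) < a then true else u i

section Evaluation

variable {n a : ℕ} {δ : ℝ} {y : ℕ → Bool}

lemma LOn_eq_of_lt (ha : a < n) (hy : ∀ i < a, y i = true) (hya : y a = false) :
    LOn n y = a := by
  have : (Finset.range n).filter (fun r => ∀ s ≤ r, y s = true) = Finset.range a := by
    ext r
    simp only [Finset.mem_filter, Finset.mem_range]
    constructor
    · rintro ⟨-, hall⟩
      by_contra! hra
      simp [hall a hra] at hya
    · exact fun hr => ⟨hr.trans ha, fun s hs => hy s (hs.trans_lt hr)⟩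
  rw [LOn, this, Finset.card_range]

lemma HLBn_of_forall (hy : ∀ i < n, y i = true) : HLBn n δ y = n := by
  rw [HLBn, if_pos hy]

lemma HLBn_of_eq_false (ha : a < n) (hae : Even a) (hy : ∀ i < a, y i = true)
    (hya : y a = false) :
    HLBn n δ y = if y (a + 1) = false then (a : ℝ) else a + 2 - δ := by
  have hnot : ¬ ∀ i < n, y i = true := fun h => by simp [h a ha] at hya
  have hblock : 2 * (LOn n y / 2) = a := by
    rw [LOn_eq_of_lt ha hy hya, Nat.two_mul_div_two_of_even hae]
  rw [HLBn, if_neg hnot, hblock]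
  simp only [hya, true_and]

lemma HLBn_of_eq_true_of_eq_false (ha : a + 1 < n) (hae : Even a)
    (hy : ∀ i < a + 1, y i = true) (hya : y (a + 1) = false) :
    HLBn n δ y = a + 2 - δ := by
  have hnot : ¬ ∀ i < n, y i = true := fun h => by simp [h (a + 1) ha] at hya
  have hblock : 2 * (LOn n y / 2) = a := by
    rw [LOn_eq_of_lt ha hy hya]
    obtain ⟨b, rfl⟩ := hae
    omega
  rw [HLBn, if_neg hnot, hblock, if_neg (by simp [hy a a.lt_succ_self])]

end Evaluation

lemma Fintype.sum_update_true_add_update_false {ι M : Type*} [Fintype ι] [DecidableEq ι]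
    [AddCommMonoid M] (f : (ι → Bool) → M) (i : ι) :
    ∑ u, (f (update u i true) + f (update u i false)) = 2 • ∑ u, f u := by
  have hflip : Involutive fun u : ι → Bool => update u i (!u i) := by
    intro u
    simp
  have hpair : ∀ u : ι → Bool, f (update u i true) + f (update u i false)
      = f u + f (update u i (!u i)) := by
    intro u
    cases h : u i
    · rw [add_comm, Bool.not_false, ← h, update_eq_self]
    · rw [Bool.not_true, ← h, update_eq_self]
  rw [Finset.sum_congr rfl fun u _ => hpair u, Finset.sum_add_distrib, two_nsmul]
  exact congrArg _ (Equiv.sum_comp hflip.toPerm f)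

section FillOnes

variable {n a : ℕ} {δ : ℝ}

lemma toNatFun_fillOnes_of_lt (u : Fin n → Bool) {i : ℕ} (hi : i < a) (hin : i < n) :
    toNatFun (fillOnes a u) i = true := by
  simp [toNatFun, fillOnes, hin, hi]

lemma toNatFun_fillOnes_of_le (u : Fin n → Bool) {i : ℕ} (hi : a ≤ i) (hin : i < n) :
    toNatFun (fillOnes a u) i = u ⟨i, hin⟩ := by
  simp [toNatFun, fillOnes, hin, Nat.not_lt.2 hi]

lemma fillOnes_update_of_lt (u : Fin n → Bool) {j : Fin n} (hj : (j : ℕ) < a) (c : Bool) :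
    fillOnes a (update u j c) = fillOnes a u := by
  funext i
  by_cases hi : (i : ℕ) < a
  · simp [fillOnes, hi]
  · have : i ≠ j := fun h => hi (h ▸ hj)
    simp [fillOnes, hi, update_of_ne this]

lemma fillOnes_of_eq_true (u : Fin n → Bool) (ha : a + 1 < n)
    (h0 : u ⟨a, by omega⟩ = true) (h1 : u ⟨a + 1, ha⟩ = true) :
    fillOnes a u = fillOnes (a + 2) u := by
  funext i
  simp only [fillOnes]
  by_cases hi : (i : ℕ) < a
  · simp [hi, show (i : ℕ) < a + 2 by omega]
  · rcases (show (i : ℕ) = a ∨ (i : ℕ) = a + 1 ∨ a + 2 ≤ i by omega) with h | h | h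
    · simp [show i = ⟨a, by omega⟩ from Fin.ext h, h0]
    · simp [show i = ⟨a + 1, ha⟩ from Fin.ext h, h1]
    · simp [hi, Nat.not_lt.2 h]

lemma HLB_fillOnes_le_of_le_add_one (hδ : 0 ≤ δ) (hae : Even a) (han : n ≤ a + 1)
    (u : Fin n → Bool) :
    HLB δ (fillOnes a u) ≤ a + 2 := by
  set y := toNatFun (fillOnes a u)
  by_cases hall : ∀ i < n, y i = true
  · rw [HLB, HLBn_of_forall hall]
    exact_mod_cast (by omega : n ≤ a + 2)
  · obtain ⟨i, hin, hyi⟩ : ∃ i < n, y i = false := by simpa using hall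
    have hia : i = a := by
      by_contra hne
      simp [y, toNatFun_fillOnes_of_lt u (by omega : i < a) hin] at hyi
    subst hia
    rw [HLB, HLBn_of_eq_false hin hae (fun j hj => toNatFun_fillOnes_of_lt u hj (by omega)) hyi]
    split_ifs <;> linarith

lemma HLB_fillOnes_of_eq_false (hae : Even a) (han : a + 1 < n) (u : Fin n → Bool)
    (h0 : u ⟨a, by omega⟩ = false) :
    HLB δ (fillOnes a u) = if u ⟨a + 1, han⟩ = false then (a : ℝ) else a + 2 - δ := by
  rw [HLB, HLBn_of_eq_false (by omega) hae (fun i hi => toNatFun_fillOnes_of_lt u hi (by omega))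
    (by rw [toNatFun_fillOnes_of_le u le_rfl (by omega), h0]),
    toNatFun_fillOnes_of_le u (by omega) han]

lemma HLB_fillOnes_of_eq_true_of_eq_false (hae : Even a) (han : a + 1 < n) (u : Fin n → Bool)
    (h0 : u ⟨a, by omega⟩ = true) (h1 : u ⟨a + 1, han⟩ = false) :
    HLB δ (fillOnes a u) = a + 2 - δ := by
  refine HLBn_of_eq_true_of_eq_false han hae (fun i hi => ?_)
    (by rw [toNatFun_fillOnes_of_le u (by omega) han, h1])
  rcases Nat.lt_succ_iff_lt_or_eq.1 hi with hi | rfl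
  · exact toNatFun_fillOnes_of_lt u hi (by omega)
  · rw [toNatFun_fillOnes_of_le u le_rfl (by omega), h0]

lemma sum_HLB_fillOnes_eq (hae : Even a) (han : a + 1 < n) :
    4 * ∑ u : Fin n → Bool, HLB δ (fillOnes a u)
      = 2 ^ n * (3 * a + 4 - 2 * δ) + ∑ u : Fin n → Bool, HLB δ (fillOnes (a + 2) u) := by
  set i0 : Fin n := ⟨a, by omega⟩
  set i1 : Fin n := ⟨a + 1, han⟩
  have hne : i1 ≠ i0 := by simp [i0, i1, Fin.ext_iff]
  set F : (Fin n → Bool) → ℝ := fun u => HLB δ (fillOnes a u)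
  set G : (Fin n → Bool) → ℝ := fun v => F (update v i0 true) + F (update v i0 false)
  have hval : ∀ u, G (update u i1 true) + G (update u i1 false)
      = HLB δ (fillOnes (a + 2) u) + (3 * a + 4 - 2 * δ) := by
    intro u
    have hupd : ∀ b0 b1, update (update u i1 b1) i0 b0 i0 = b0 ∧
        update (update u i1 b1) i0 b0 i1 = b1 := fun b0 b1 => by
      simp [update_of_ne hne]
    simp only [G, F]
    rw [fillOnes_of_eq_true _ han (hupd true true).1 (hupd true true).2,
      fillOnes_update_of_lt _ (by simp [i0]), fillOnes_update_of_lt _ (by simp [i1]),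
      HLB_fillOnes_of_eq_false hae han _ (hupd false true).1, if_neg (by simp [i1, hupd]),
      HLB_fillOnes_of_eq_true_of_eq_false hae han _ (hupd true false).1 (hupd true false).2,
      HLB_fillOnes_of_eq_false hae han _ (hupd false false).1, if_pos (hupd false false).2]
    ring
  calc 4 * ∑ u, F u = 2 • 2 • ∑ u, F u := by simp only [nsmul_eq_mul]; push_cast; ring
    _ = ∑ u, (G (update u i1 true) + G (update u i1 false)) := by
      rw [Fintype.sum_update_true_add_update_false G i1,
        Fintype.sum_update_true_add_update_false F i0]
    _ = _ := by
      rw [Finset.sum_congr rfl fun u _ => hval u, Finset.sum_add_distrib, Finset.sum_const,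
        Finset.card_univ, Fintype.card_fun, Fintype.card_bool, Fintype.card_fin, nsmul_eq_mul]
      push_cast
      ring

end FillOnes

theorem sum_HLB_fillOnes_le {n : ℕ} {δ : ℝ} (hδ : 0 ≤ δ) {a : ℕ} (hae : Even a) :
    ∑ u : Fin n → Bool, HLB δ (fillOnes a u) ≤ 2 ^ n * (a + 2) := by
  by_cases han : a + 1 < n
  · have hrec := sum_HLB_fillOnes_le (n := n) hδ (hae.add even_two)
    have hstep := sum_HLB_fillOnes_eq (δ := δ) hae han
    push_cast at hrec
    linarith [mul_nonneg (pow_nonneg zero_le_two n : (0 : ℝ) ≤ 2 ^ n) hδ]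
  · calc ∑ u : Fin n → Bool, HLB δ (fillOnes a u)
        ≤ ∑ _u : Fin n → Bool, ((a : ℝ) + 2) :=
          Finset.sum_le_sum fun u _ => HLB_fillOnes_le_of_le_add_one hδ hae (by omega) u
      _ = 2 ^ n * (a + 2) := by simp [mul_add]
termination_by n - a

theorem expected_HLB_of_random_suffix_le_general (n m : ℕ) (δ : ℝ) (hδ0 : 0 ≤ δ) :
    ∑ u : Fin n → Bool, ((PMF.uniformOfFintype (Fin n → Bool)) u).toReal *
        HLB δ (fun i => if (i : ℕ) < 2 * m + 2 then true else u i)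
      ≤ 2 * (m : ℝ) + 4 := by
  have huniform : ∀ u : Fin n → Bool,
      ((PMF.uniformOfFintype (Fin n → Bool)) u).toReal = ((2 : ℝ) ^ n)⁻¹ := by
    simp [PMF.uniformOfFintype_apply, ENNReal.toReal_inv]
  have hbound := sum_HLB_fillOnes_le (n := n) hδ0 (even_two_mul m |>.add even_two)
  simp only [huniform, ← Finset.mul_sum]
  calc ((2 : ℝ) ^ n)⁻¹ * ∑ u : Fin n → Bool, HLB δ (fillOnes (2 * m + 2) u)
      ≤ ((2 : ℝ) ^ n)⁻¹ * (2 ^ n * ((2 * m + 2 : ℕ) + 2)) := by gcongr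
    _ = 2 * m + 4 := by push_cast; field_simp; ring

/-- **Free-rider bound.** Let `n` be even and positive, `m ∈ [0..n/2-1]`, and
`δ ∈ [0,2]`. If `x` is a random bit string whose first `2m+2` bits are all `1`
and whose remaining bits are independent and uniformly distributed (here realized
as the image of a uniformly random string `u` under fixing the first `2m+2` bits
to `1`), then `E[HLB_δ(x)] ≤ 2m + 4`. -/
theorem expected_HLB_of_random_suffix_le (n m : ℕ) (hn : 0 < n) (he : Even n)
    (hm : 2 * m + 2 ≤ n) (δ : ℝ) (hδ0 : 0 ≤ δ) (hδ2 : δ ≤ 2) :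
    ∑ u : Fin n → Bool, ((PMF.uniformOfFintype (Fin n → Bool)) u).toReal *
        HLB δ (fun i => if (i : ℕ) < 2 * m + 2 then true else u i)
      ≤ 2 * (m : ℝ) + 4 :=
  expected_HLB_of_random_suffix_le_general n m δ hδ0
end

section
/- Let n be an even positive integer and m an integer with n/4 ≤ m ≤ n/2 − 1, and let δ ∈ (0,2). Let x be a random bit string in {0,1}^n such that DLB(x) = 2m almost surely (that is, x_i = 1 for i ∈ [1..2m] and exactly one of x_{2m+1}, x_{2m+2} equals 1) and such that the bits x_i, i ∈ [2m+3..n], are independent, uniformly distributed in {0,1}, and independent of (x_{2m+1}, x_{2m+2}). Let y be a random bit string generated from x via an arbitrary unary unbiased variation operator V, and set Y := (HLB_δ(y) − HLB_δ(x))·1_{DLB(y) ≥ DLB(x)}. Then E[Y] ≤ 2δ/n. -/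
open Finset Function
open scoped BigOperators

section LeadingBlocks

variable {n L : ℕ} {x : ℕ → Bool} {δ : ℝ}

lemma le_LOn (hLn : L ≤ n) (hones : ∀ i < L, x i = true) : L ≤ LOn n x := by
  unfold LOn
  calc L = #(range L) := (card_range L).symm
    _ ≤ _ := card_le_card fun r hr => by
      simp only [mem_filter, mem_range] at hr ⊢
      exact ⟨hr.trans_le hLn, fun s hs => hones s (hs.trans_lt hr)⟩

lemma LOn_le_of_eq_false {c : ℕ} (hc : x c = false) : LOn n x ≤ c := by
  unfold LOn
  calc _ ≤ #(range c) := card_le_card fun r hr => by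
        simp only [mem_filter, mem_range] at hr ⊢
        by_contra! hcr
        simpa [hc] using hr.2 c hcr
    _ = c := card_range c

lemma not_forall_eq_true_of_eq_false {c : ℕ} (hc : x c = false) (hcn : c < n) :
    ¬ ∀ i < n, x i = true :=
  fun h => by simpa [hc] using h c hcn

lemma le_DLBn (hL : Even L) (hLn : L ≤ n) (hones : ∀ i < L, x i = true) : L ≤ DLBn n x := by
  have := le_LOn hLn hones
  obtain ⟨k, rfl⟩ := hL
  unfold DLBn
  split_ifs <;> omega

lemma DLBn_lt_of_eq_false {c M : ℕ} (hc : x c = false) (hcM : c < M) (hM : M ≤ n)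
    (hMe : Even M) : DLBn n x < M := by
  have := LOn_le_of_eq_false (n := n) hc
  rw [DLBn, if_neg (not_forall_eq_true_of_eq_false hc (by omega))]
  obtain ⟨k, rfl⟩ := hMe
  split_ifs <;> omega

lemma two_mul_LOn_div_two_of_block (hL : Even L) (hLn : L + 2 ≤ n)
    (hones : ∀ i < L, x i = true) (hblock : x L = false ∨ x (L + 1) = false) :
    2 * (LOn n x / 2) = L := by
  have h1 := le_LOn (n := n) (by omega) hones
  have h2 : LOn n x ≤ L + 1 := by
    rcases hblock with h | h
    · exact (LOn_le_of_eq_false h).trans (by omega)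
    · exact LOn_le_of_eq_false h
  obtain ⟨k, rfl⟩ := hL
  omega

lemma not_forall_eq_true_of_block (hLn : L + 2 ≤ n)
    (hblock : x L = false ∨ x (L + 1) = false) : ¬ ∀ i < n, x i = true := by
  rcases hblock with h | h
  exacts [not_forall_eq_true_of_eq_false h (by omega),
    not_forall_eq_true_of_eq_false h (by omega)]

lemma DLBn_of_block (hL : Even L) (hLn : L + 2 ≤ n) (hones : ∀ i < L, x i = true)
    (hblock : x L = false ∨ x (L + 1) = false) :
    DLBn n x = if x L = false ∧ x (L + 1) = false then L + 1 else L := by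
  rw [DLBn, if_neg (not_forall_eq_true_of_block hLn hblock),
    two_mul_LOn_div_two_of_block hL hLn hones hblock]

lemma HLBn_of_block (hL : Even L) (hLn : L + 2 ≤ n) (hones : ∀ i < L, x i = true)
    (hblock : x L = false ∨ x (L + 1) = false) :
    HLBn n δ x = if x L = false ∧ x (L + 1) = false then (L : ℝ) else L + 2 - δ := by
  rw [HLBn, if_neg (not_forall_eq_true_of_block hLn hblock),
    two_mul_LOn_div_two_of_block hL hLn hones hblock]

end LeadingBlocks

section BitStrings

variable {n L : ℕ} {δ : ℝ} {x : Fin n → Bool}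

lemma toNatFun_of_val_eq (x : Fin n → Bool) {i : Fin n} {k : ℕ} (h : (i : ℕ) = k) :
    toNatFun x k = x i := by
  subst h
  exact dif_pos i.isLt

lemma toNatFun_eq_true_of_lt (hLn : L ≤ n) (hones : ∀ i : Fin n, (i : ℕ) < L → x i = true) :
    ∀ i < L, toNatFun x i = true :=
  fun i hi => (toNatFun_of_val_eq x (i := ⟨i, by omega⟩) rfl).trans (hones _ hi)

lemma le_DLB (hL : Even L) (hLn : L ≤ n) (hones : ∀ i : Fin n, (i : ℕ) < L → x i = true) :
    L ≤ DLB x :=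
  le_DLBn hL hLn (toNatFun_eq_true_of_lt hLn hones)

lemma DLB_lt_of_eq_false {M : ℕ} {i : Fin n} (hi : x i = false) (hiM : (i : ℕ) < M)
    (hM : M ≤ n) (hMe : Even M) : DLB x < M :=
  DLBn_lt_of_eq_false ((toNatFun_of_val_eq x rfl).trans hi) hiM hM hMe

lemma HLB_of_forall_eq_true (h : ∀ i, x i = true) : HLB δ x = n := by
  rw [HLB, HLBn, if_pos fun i hi => (toNatFun_of_val_eq x (i := ⟨i, hi⟩) rfl).trans (h _)]

def IsBlockAt (L : ℕ) (p p' : Fin n) : Prop :=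
  ((p : ℕ) = L ∧ (p' : ℕ) = L + 1) ∨ ((p : ℕ) = L + 1 ∧ (p' : ℕ) = L)

namespace IsBlockAt

variable {p p' : Fin n}

lemma symm (h : IsBlockAt L p p') : IsBlockAt L p' p :=
  (Or.symm h).imp And.symm And.symm

lemma add_two_le (h : IsBlockAt L p p') : L + 2 ≤ n := by
  have := p.isLt
  have := p'.isLt
  rcases h with h | h <;> omega

lemma le_val (h : IsBlockAt L p p') : L ≤ (p : ℕ) := by
  rcases h with h | h <;> omega

lemma val_lt (h : IsBlockAt L p p') : (p : ℕ) < L + 2 := by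
  rcases h with h | h <;> omega

lemma ne (h : IsBlockAt L p p') : p ≠ p' := fun e => by
  subst e
  rcases h with h | h <;> omega

lemma lt_or_eq_or_eq (h : IsBlockAt L p p') {i : Fin n} (hi : (i : ℕ) < L + 2) :
    (i : ℕ) < L ∨ i = p ∨ i = p' := by
  by_contra! hne
  have := Fin.val_ne_of_ne hne.2.1
  have := Fin.val_ne_of_ne hne.2.2
  rcases h with h | h <;> omega

lemma toNatFun_eq (h : IsBlockAt L p p') (x : Fin n → Bool) :
    (toNatFun x L = x p ∧ toNatFun x (L + 1) = x p') ∨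
      (toNatFun x L = x p' ∧ toNatFun x (L + 1) = x p) := by
  rcases h with ⟨hp, hp'⟩ | ⟨hp, hp'⟩
  · exact .inl ⟨toNatFun_of_val_eq x hp, toNatFun_of_val_eq x hp'⟩
  · exact .inr ⟨toNatFun_of_val_eq x hp', toNatFun_of_val_eq x hp⟩

end IsBlockAt

variable {p p' : Fin n}

lemma DLB_HLB_of_block (hL : Even L) (hpp : IsBlockAt L p p')
    (hones : ∀ i : Fin n, (i : ℕ) < L → x i = true) (hblock : x p = false ∨ x p' = false) :
    DLB x = (if x p = false ∧ x p' = false then L + 1 else L) ∧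
      HLB δ x = if x p = false ∧ x p' = false then (L : ℝ) else L + 2 - δ := by
  have hLn := hpp.add_two_le
  have hones' := toNatFun_eq_true_of_lt (by omega) hones
  rcases hpp.toNatFun_eq x with ⟨h, h'⟩ | ⟨h, h'⟩
  · have hb : toNatFun x L = false ∨ toNatFun x (L + 1) = false := by rwa [h, h']
    rw [DLB, HLB, DLBn_of_block hL hLn hones' hb, HLBn_of_block hL hLn hones' hb, h, h']
    exact ⟨rfl, rfl⟩
  · have hb : toNatFun x L = false ∨ toNatFun x (L + 1) = false := by rwa [h, h', or_comm]
    rw [DLB, HLB, DLBn_of_block hL hLn hones' hb, HLBn_of_block hL hLn hones' hb, h, h']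
    simp only [and_comm, and_self]

end BitStrings

section UniformTail

lemma expect_eq_expect_update {ι : Type*} [Fintype ι] [DecidableEq ι] (a : ι)
    (f : (ι → Bool) → ℝ) :
    𝔼 u, f u = 𝔼 u, (f (update u a true) + f (update u a false)) / 2 := by
  have hflip : Involutive fun u : ι → Bool => update u a (!u a) := fun u => by simp
  have hpair : ∀ u, f (update u a true) + f (update u a false) = f u + f (update u a (!u a)) := by
    intro u
    cases h : u a
    · rw [add_comm, ← h, update_eq_self, h]; rfl
    · rw [← h, update_eq_self, h]; rfl
  simp_rw [hpair, ← Finset.expect_div, Finset.expect_add_distrib,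
    ← Fintype.expect_bijective _ hflip.bijective (fun u => f (update u a (!u a))) f
      (fun _ => rfl)]
  ring

lemma expect_eq_expect_update_update {ι : Type*} [Fintype ι] [DecidableEq ι] (a a' : ι)
    (f : (ι → Bool) → ℝ) :
    𝔼 u, f u = 𝔼 u, (∑ b : Bool, ∑ b' : Bool, f (update (update u a' b') a b)) / 4 := by
  rw [expect_eq_expect_update a f, ← Finset.expect_div, Finset.expect_add_distrib,
    expect_eq_expect_update a' (fun u => f (update u a true)),
    expect_eq_expect_update a' (fun u => f (update u a false))]
  simp only [Fintype.sum_bool, ← Finset.expect_div, Finset.expect_add_distrib]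
  ring

variable {n L : ℕ} {δ : ℝ} {p p' : Fin n}

def prefixOnes (L : ℕ) (u : Fin n → Bool) : Fin n → Bool :=
  fun i => if (i : ℕ) < L then true else u i

lemma prefixOnes_update {u : Fin n → Bool} {i : Fin n} (hi : (i : ℕ) < L) (b : Bool) :
    prefixOnes L (update u i b) = prefixOnes L u := by
  funext j
  by_cases hj : j = i
  · subst hj
    simp [prefixOnes, hi]
  · simp [prefixOnes, update_of_ne hj]

lemma prefixOnes_eq_self {u : Fin n → Bool} (h : ∀ i : Fin n, (i : ℕ) < L → u i = true) :
    prefixOnes L u = u := by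
  funext i
  by_cases hi : (i : ℕ) < L
  · simp [prefixOnes, hi, h i hi]
  · simp [prefixOnes, hi]

lemma HLB_prefixOnes_of_block (hL : Even L) (hpp : IsBlockAt L p p') (u : Fin n → Bool) :
    HLB δ (prefixOnes L u) =
      if u p = true ∧ u p' = true then HLB δ (prefixOnes (L + 2) u)
      else if u p = false ∧ u p' = false then (L : ℝ) else L + 2 - δ := by
  have hp : prefixOnes L u p = u p := if_neg (not_lt.2 hpp.le_val)
  have hp' : prefixOnes L u p' = u p' := if_neg (not_lt.2 hpp.symm.le_val)
  have hones : ∀ i : Fin n, (i : ℕ) < L → prefixOnes L u i = true := fun i hi => if_pos hi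
  by_cases h11 : u p = true ∧ u p' = true
  · rw [if_pos h11]
    congr 1
    funext i
    by_cases hi : (i : ℕ) < L + 2
    · rcases hpp.lt_or_eq_or_eq hi with hi | rfl | rfl
      · simp [prefixOnes, hi, show (i : ℕ) < L + 2 by omega]
      · simp [prefixOnes, hi, h11.1]
      · simp [prefixOnes, hi, h11.2]
    · simp [prefixOnes, hi, show ¬ (i : ℕ) < L by omega]
  · have hblock : prefixOnes L u p = false ∨ prefixOnes L u p' = false := by
      rw [hp, hp']
      cases h1 : u p <;> cases h2 : u p' <;> simp_all
    rw [if_neg h11, (DLB_HLB_of_block hL hpp hones hblock).2, hp, hp']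

theorem expect_HLB_prefixOnes_le (hn : Even n) (hδ : 0 ≤ δ) (hL : Even L) (hLn : L ≤ n) :
    𝔼 u : Fin n → Bool, HLB δ (prefixOnes L u) ≤ L + 2 := by
  obtain ⟨k, hk⟩ : ∃ k, n = L + 2 * k := by
    obtain ⟨a, rfl⟩ := hn
    obtain ⟨b, rfl⟩ := hL
    exact ⟨a - b, by omega⟩
  induction k generalizing L with
  | zero =>
    have hnL : (n : ℝ) = L := by exact_mod_cast (by omega : n = L)
    have hall : ∀ u : Fin n → Bool, HLB δ (prefixOnes L u) = n := fun u =>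
      HLB_of_forall_eq_true fun i => if_pos (by omega)
    simp only [hall, Fintype.expect_const]
    linarith
  | succ k ih =>
    let a : Fin n := ⟨L, by omega⟩
    let a' : Fin n := ⟨L + 1, by omega⟩
    have hpp : IsBlockAt L a a' := .inl ⟨rfl, rfl⟩
    have hval : ∀ u b b', HLB δ (prefixOnes L (update (update u a' b') a b)) =
        if b = true ∧ b' = true then HLB δ (prefixOnes (L + 2) u)
        else if b = false ∧ b' = false then (L : ℝ) else L + 2 - δ := by
      intro u b b'
      rw [HLB_prefixOnes_of_block hL hpp, update_self,
        update_of_ne (show a' ≠ a from fun h => by simpa [a, a'] using congrArg Fin.val h),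
        update_self, prefixOnes_update (by simp [a]), prefixOnes_update (by simp [a'])]
    have ih' := ih (hL.add even_two) (by omega) (by omega)
    -- the block at `L` is `11`, `10`, `01`, `00` with probability `1/4` each
    calc 𝔼 u, HLB δ (prefixOnes L u)
        = 𝔼 u, (HLB δ (prefixOnes (L + 2) u) + (3 * L + 4 - 2 * δ)) / 4 := by
          rw [expect_eq_expect_update_update a a']
          congr 1
          funext u
          simp only [Fintype.sum_bool, hval, and_true, and_false, Bool.true_eq_false,
            Bool.false_eq_true, if_true, if_false]
          ring
      _ ≤ L + 2 := by
          rw [← Finset.expect_div, Finset.expect_add_distrib, Fintype.expect_const]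
          push_cast at ih'
          linarith

end UniformTail

section Gain

variable {n L : ℕ} {δ : ℝ} {p p' : Fin n} {x : Fin n → Bool}

noncomputable def gain (δ : ℝ) (x y : Fin n → Bool) : ℝ :=
  if DLB x ≤ DLB y then HLB δ y - HLB δ x else 0

def SoleOneBelow (w : ℕ) (p : Fin n) (g : Fin n → Bool) : Prop :=
  ∀ i : Fin n, (i : ℕ) < w → (g i = true ↔ i = p)

instance (w : ℕ) (p : Fin n) : DecidablePred (SoleOneBelow w p) := by
  unfold SoleOneBelow
  infer_instance

lemma not_soleOneBelow {w : ℕ} {g : Fin n → Bool} {i : Fin n} (hi : g i = true)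
    (hiw : (i : ℕ) < w) (hip : i ≠ p) : ¬ SoleOneBelow w p g :=
  fun h => hip ((h i hiw).1 hi)

lemma soleOneBelow_iff_of_block (hpp : IsBlockAt L p p') {g : Fin n → Bool}
    (hlow : ∀ i : Fin n, (i : ℕ) < L → g i = false) :
    SoleOneBelow (L + 2) p g ↔ g p = true ∧ g p' = false := by
  constructor
  · intro h
    refine ⟨(h p hpp.val_lt).2 rfl, Bool.eq_false_iff.2 fun h' => ?_⟩
    exact hpp.ne ((h p' hpp.symm.val_lt).1 h').symm
  · rintro ⟨h1, h2⟩ i hi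
    rcases hpp.lt_or_eq_or_eq hi with hi | rfl | rfl
    · simp [hlow i hi, show i ≠ p from fun e => by have := hpp.le_val; subst e; omega]
    · simp [h1]
    · simp [h2, hpp.ne.symm]

theorem gain_xor (hL : Even L) (hpp : IsBlockAt L p p')
    (hones : ∀ i : Fin n, (i : ℕ) < L → x i = true) (hp : x p = false) (hp' : x p' = true)
    (g : Fin n → Bool) :
    gain δ x (fun i => xor (x i) (g i)) =
      (if SoleOneBelow (L + 2) p g then
        HLB δ (prefixOnes (L + 2) fun i => xor (x i) (g i)) - (L + 2 - δ) else 0) +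
      (if SoleOneBelow (L + 2) p' g then δ - 2 else 0) := by
  set y : Fin n → Bool := fun i => xor (x i) (g i)
  have hLn := hpp.add_two_le
  obtain ⟨hDx, hHx⟩ := DLB_HLB_of_block (δ := δ) hL hpp hones (.inl hp)
  simp only [hp, hp', Bool.true_eq_false, and_false, if_false] at hDx hHx
  by_cases hlow : ∀ i : Fin n, (i : ℕ) < L → g i = false
  · have hyones : ∀ i : Fin n, (i : ℕ) < L → y i = true := fun i hi => by
      simp [y, hones i hi, hlow i hi]
    simp only [soleOneBelow_iff_of_block hpp hlow, soleOneBelow_iff_of_block hpp.symm hlow]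
    have hyp : y p = g p := by simp [y, hp]
    have hyp' : y p' = !g p' := by simp [y, hp']
    cases hg : g p <;> cases hg' : g p' <;> rw [hg] at hyp <;> rw [hg'] at hyp'
    · obtain ⟨hDy, hHy⟩ := DLB_HLB_of_block (δ := δ) hL hpp hyones (.inl hyp)
      simp [gain, hDx, hHx, hDy, hHy, hyp, hyp']
    · obtain ⟨hDy, hHy⟩ := DLB_HLB_of_block (δ := δ) hL hpp hyones (.inl hyp)
      simp [gain, hDx, hHx, hDy, hHy, hyp, hyp']
      ring
    · have hyones' : ∀ i : Fin n, (i : ℕ) < L + 2 → y i = true := fun i hi => by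
        rcases hpp.lt_or_eq_or_eq hi with hi | rfl | rfl
        exacts [hyones i hi, hyp, hyp']
      have hDy := le_DLB (by simpa using hL.add even_two) hLn hyones'
      simp [gain, hDx, hHx, prefixOnes_eq_self hyones', show L ≤ DLB y by omega]
    · obtain ⟨hDy, hHy⟩ := DLB_HLB_of_block (δ := δ) hL hpp hyones (.inr hyp')
      simp [gain, hDx, hHx, hDy, hHy, hyp, hyp']
  · simp only [not_forall, Bool.not_eq_false] at hlow
    obtain ⟨i, hi, hgi⟩ := hlow
    have hyi : y i = false := by simp [y, hones i hi, hgi]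
    have hDy := DLB_lt_of_eq_false hyi hi (by omega) hL
    have hS : ∀ q : Fin n, L ≤ (q : ℕ) → ¬ SoleOneBelow (L + 2) q g := fun q hq =>
      not_soleOneBelow hgi (by omega) fun e => by subst e; omega
    simp [gain, hDx, hS p hpp.le_val, hS p' hpp.symm.le_val, not_le.2 hDy]

end Gain

section ShiftInvariantWeights

variable {n w : ℕ} {p p' : Fin n}

lemma eq_of_soleOneBelow_comp_addRight [NeZero n] (hpw : (p : ℕ) < w) (hnp : n ≤ 2 * p)
    {g : Fin n → Bool} {t t' : Fin n} (ht : SoleOneBelow w p (g ∘ Equiv.addRight t))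
    (ht' : SoleOneBelow w p (g ∘ Equiv.addRight t')) : t = t' := by
  have key : ∀ {s s' : Fin n}, SoleOneBelow w p (g ∘ Equiv.addRight s) →
      SoleOneBelow w p (g ∘ Equiv.addRight s') → s ≠ s' → w ≤ ((p + (s - s') : Fin n) : ℕ) := by
    intro s s' hs hs' hne
    by_contra! hlt
    have hg : (g ∘ Equiv.addRight s') (p + (s - s')) = true := by
      simpa [add_assoc] using (hs p hpw).2 rfl
    exact hne (sub_eq_zero.1 (by simpa using (hs' _ hlt).1 hg))
  by_contra hne
  have h1 := key ht ht' hne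
  have h2 := key ht' ht (Ne.symm hne)
  rw [Fin.val_add_eq_ite] at h1 h2
  rcases lt_or_gt_of_ne hne with hlt | hlt
  · rw [Fin.coe_sub_iff_lt.2 hlt] at h1
    rw [Fin.sub_val_of_le hlt.le] at h2
    have := Fin.lt_def.1 hlt
    split_ifs at h1 h2 <;> omega
  · rw [Fin.sub_val_of_le hlt.le] at h1
    rw [Fin.coe_sub_iff_lt.2 hlt] at h2
    have := Fin.lt_def.1 hlt
    split_ifs at h1 h2 <;> omega

theorem mul_sum_soleOneBelow_le_one [NeZero n] (hpw : (p : ℕ) < w) (hnp : n ≤ 2 * p)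
    (q : (Fin n → Bool) → ℝ) (hq0 : ∀ g, 0 ≤ q g) (hq1 : ∑ g, q g = 1)
    (hq : ∀ t g, q (g ∘ Equiv.addRight t) = q g) :
    n * ∑ g with SoleOneBelow w p g, q g ≤ 1 := by
  have hshift : ∀ t : Fin n, ∑ g with SoleOneBelow w p (g ∘ Equiv.addRight t), q g =
      ∑ g with SoleOneBelow w p g, q g := by
    intro t
    simp only [sum_filter]
    exact Fintype.sum_bijective _ (Equiv.addRight t).bijective.comp_right _ _ fun g => by
      rw [hq]
  have hcard : ∀ g : Fin n → Bool, #{t | SoleOneBelow w p (g ∘ Equiv.addRight t)} ≤ 1 :=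
    fun g => card_le_one.2 fun t ht t' ht' =>
      eq_of_soleOneBelow_comp_addRight hpw hnp (mem_filter.1 ht).2 (mem_filter.1 ht').2
  calc (n : ℝ) * ∑ g with SoleOneBelow w p g, q g
      = ∑ t : Fin n, ∑ g with SoleOneBelow w p (g ∘ Equiv.addRight t), q g := by
        rw [sum_congr rfl fun t _ => hshift t, sum_const, card_univ, Fintype.card_fin,
          nsmul_eq_mul]
    _ = ∑ g, (#{t | SoleOneBelow w p (g ∘ Equiv.addRight t)} : ℝ) * q g := by
        simp only [sum_filter]
        rw [sum_comm]
        refine sum_congr rfl fun g _ => ?_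
        rw [← sum_filter, sum_const, nsmul_eq_mul]
    _ ≤ ∑ g, q g := sum_le_sum fun g _ =>
        mul_le_of_le_one_left (hq0 g) (by exact_mod_cast hcard g)
    _ = 1 := hq1

lemma soleOneBelow_comp_swap (hpw : (p : ℕ) < w) (hp'w : (p' : ℕ) < w)
    {g : Fin n → Bool} : SoleOneBelow w p (g ∘ Equiv.swap p p') ↔ SoleOneBelow w p' g := by
  have hlt : ∀ i : Fin n, ((Equiv.swap p p' i : Fin n) : ℕ) < w ↔ (i : ℕ) < w := by
    intro i
    rw [Equiv.swap_apply_def]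
    split_ifs with h h' <;> simp_all
  constructor
  · intro h j hj
    simpa [Equiv.swap_apply_eq_iff] using h (Equiv.swap p p' j) ((hlt j).2 hj)
  · intro h i hi
    simpa [Equiv.swap_apply_eq_iff] using h (Equiv.swap p p' i) ((hlt i).2 hi)

theorem sum_soleOneBelow_eq_of_swap (hpw : (p : ℕ) < w) (hp'w : (p' : ℕ) < w)
    (q : (Fin n → Bool) → ℝ) (hq : ∀ g, q (g ∘ Equiv.swap p p') = q g) :
    ∑ g with SoleOneBelow w p g, q g = ∑ g with SoleOneBelow w p' g, q g := by
  simp only [sum_filter]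
  refine (Fintype.sum_bijective _ (Equiv.swap p p').bijective.comp_right _ _ fun g => ?_).symm
  simp only [hq, soleOneBelow_comp_swap hpw hp'w]

end ShiftInvariantWeights

section MixedBlockStart

variable {n m : ℕ} {δ : ℝ} {b : Bool} {p p' : Fin n}

def mixedBlockString (m : ℕ) (b : Bool) (u : Fin n → Bool) : Fin n → Bool := fun i =>
  if (i : ℕ) < 2 * m then true
  else if (i : ℕ) = 2 * m then b
  else if (i : ℕ) = 2 * m + 1 then !b
  else u i

lemma prefixOnes_mixedBlockString_xor (u g : Fin n → Bool) :
    prefixOnes (2 * m + 2) (fun i => xor (mixedBlockString m b u i) (g i)) =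
      prefixOnes (2 * m + 2) (fun i => xor (u i) (g i)) := by
  funext i
  by_cases hi : (i : ℕ) < 2 * m + 2
  · simp [prefixOnes, hi]
  · simp [prefixOnes, mixedBlockString, hi, show ¬ (i : ℕ) < 2 * m by omega,
      show (i : ℕ) ≠ 2 * m by omega, show (i : ℕ) ≠ 2 * m + 1 by omega]

theorem expect_gain_mixedBlockString (hpp : IsBlockAt (2 * m) p p')
    (hp : ∀ u, mixedBlockString m b u p = false) (hp' : ∀ u, mixedBlockString m b u p' = true)
    (g : Fin n → Bool) :
    𝔼 u, gain δ (mixedBlockString m b u) (fun i => xor (mixedBlockString m b u i) (g i)) =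
      (if SoleOneBelow (2 * m + 2) p g then
        𝔼 u : Fin n → Bool, HLB δ (prefixOnes (2 * m + 2) u) - (2 * m + 2 - δ) else 0) +
      (if SoleOneBelow (2 * m + 2) p' g then δ - 2 else 0) := by
  have hones : ∀ u (i : Fin n), (i : ℕ) < 2 * m → mixedBlockString m b u i = true :=
    fun u i hi => if_pos hi
  have hxor : Involutive fun u : Fin n → Bool => fun i => xor (u i) (g i) :=
    fun u => by simp
  have htail : 𝔼 u : Fin n → Bool, HLB δ (prefixOnes (2 * m + 2) fun i => xor (u i) (g i)) =
      𝔼 u : Fin n → Bool, HLB δ (prefixOnes (2 * m + 2) u) :=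
    Fintype.expect_bijective _ hxor.bijective _ _ fun _ => rfl
  rw [Finset.expect_congr rfl fun u _ =>
    (gain_xor (even_two_mul m) hpp (hones u) (hp u) (hp' u) g).trans
      (by rw [prefixOnes_mixedBlockString_xor]), Finset.expect_add_distrib]
  push_cast
  split_ifs <;> simp [Finset.expect_sub_distrib, htail]

end MixedBlockStart

lemma PMF.sum_toReal_eq_one {α : Type*} [Fintype α] (μ : PMF α) : ∑ a, (μ a).toReal = 1 := by
  rw [← ENNReal.toReal_sum fun a _ => μ.apply_ne_top a, ← tsum_fintype (L := .unconditional α),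
    μ.tsum_coe, ENNReal.toReal_one]

lemma PMF.sum_uniformOfFintype_toReal_mul {α : Type*} [Fintype α] [Nonempty α] (f : α → ℝ) :
    ∑ a, (PMF.uniformOfFintype α a).toReal * f a = 𝔼 a, f a := by
  simp [PMF.uniformOfFintype_apply, Fintype.expect_eq_sum_div_card, ← Finset.mul_sum,
    div_eq_inv_mul]

namespace IsUnbiased

variable {n : ℕ} {V : (Fin n → Bool) → PMF (Fin n → Bool)}

lemma apply_eq_apply_zero (hV : IsUnbiased V) (x y : Fin n → Bool) :
    V x y = V (fun _ => false) (fun i => xor (x i) (y i)) := by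
  have h0 : (fun i => xor (x i) (x i)) = fun _ => false := by
    funext i
    exact Bool.xor_self _
  have h1 : (fun i => xor (y i) (x i)) = fun i => xor (x i) (y i) := by
    funext i
    exact Bool.xor_comm _ _
  rw [hV.1 x x y, h0, h1]

lemma apply_zero_comp (hV : IsUnbiased V) (σ : Equiv.Perm (Fin n)) (g : Fin n → Bool) :
    V (fun _ => false) (g ∘ σ) = V (fun _ => false) g :=
  (hV.2 (fun _ => false) σ g).symm

lemma sum_toReal_mul (hV : IsUnbiased V) (x : Fin n → Bool) (F : (Fin n → Bool) → ℝ) :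
    ∑ y, (V x y).toReal * F y =
      ∑ g, (V (fun _ => false) g).toReal * F (fun i => xor (x i) (g i)) := by
  have hxor : Involutive fun y : Fin n → Bool => fun i => xor (x i) (y i) := fun y => by simp
  exact Fintype.sum_bijective _ hxor.bijective _ _ fun y => by
    rw [hV.apply_eq_apply_zero x y]
    simp

end IsUnbiased

theorem expect_sum_gain_of_block {n m : ℕ} {δ : ℝ} {b : Bool} {p p' : Fin n}
    {V : (Fin n → Bool) → PMF (Fin n → Bool)} (hV : IsUnbiased V)
    (hpp : IsBlockAt (2 * m) p p')
    (hp : ∀ u, mixedBlockString m b u p = false) (hp' : ∀ u, mixedBlockString m b u p' = true) :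
    𝔼 u, ∑ y, (V (mixedBlockString m b u) y).toReal * gain δ (mixedBlockString m b u) y =
      (∑ g with SoleOneBelow (2 * m + 2) p g, (V (fun _ => false) g).toReal) *
          (𝔼 u : Fin n → Bool, HLB δ (prefixOnes (2 * m + 2) u) - (2 * m + 2 - δ)) +
        (∑ g with SoleOneBelow (2 * m + 2) p' g, (V (fun _ => false) g).toReal) * (δ - 2) := by
  rw [Finset.expect_congr rfl fun u _ => hV.sum_toReal_mul (mixedBlockString m b u) _,
    Finset.expect_sum_comm]
  simp_rw [← Finset.mul_expect, expect_gain_mixedBlockString hpp hp hp', mul_add,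
    Finset.sum_add_distrib, mul_ite, mul_zero, ← Finset.sum_filter, Finset.sum_mul]

theorem expect_sum_gain_mixedBlockString {n m : ℕ} {δ : ℝ}
    {V : (Fin n → Bool) → PMF (Fin n → Bool)} (hV : IsUnbiased V) {i0 i1 : Fin n}
    (hi0 : (i0 : ℕ) = 2 * m) (hi1 : (i1 : ℕ) = 2 * m + 1) (b : Bool) :
    𝔼 u, ∑ y, (V (mixedBlockString m b u) y).toReal * gain δ (mixedBlockString m b u) y =
      (∑ g with SoleOneBelow (2 * m + 2) i0 g, (V (fun _ => false) g).toReal) *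
        (𝔼 u : Fin n → Bool, HLB δ (prefixOnes (2 * m + 2) u) - (2 * m + 2 - δ) + (δ - 2)) := by
  have hblock : IsBlockAt (2 * m) i0 i1 := .inl ⟨hi0, hi1⟩
  have hswap := sum_soleOneBelow_eq_of_swap hblock.val_lt hblock.symm.val_lt
    (fun g => (V (fun _ => false) g).toReal) fun g => by rw [hV.apply_zero_comp]
  cases b
  · rw [expect_sum_gain_of_block hV hblock (by simp [mixedBlockString, hi0])
      (by simp [mixedBlockString, hi1]), ← hswap]
    ring
  · rw [expect_sum_gain_of_block hV hblock.symm (by simp [mixedBlockString, hi1])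
      (by simp [mixedBlockString, hi0]), ← hswap]
    ring

theorem drift_from_even_DLB_value_general (n m : ℕ) (he : Even n)
    (hm1 : n ≤ 4 * m) (hm2 : 2 * m + 2 ≤ n)
    (δ : ℝ) (hδ0 : 0 < δ)
    (β : PMF Bool)
    (V : (Fin n → Bool) → PMF (Fin n → Bool)) (hV : IsUnbiased V) :
    (∑ b : Bool, (β b).toReal *
      ∑ u : Fin n → Bool, ((PMF.uniformOfFintype (Fin n → Bool)) u).toReal *
        (let x : Fin n → Bool := fun i =>
          if (i : ℕ) < 2 * m then true
          else if (i : ℕ) = 2 * m then b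
          else if (i : ℕ) = 2 * m + 1 then !b
          else u i
        ∑ y : Fin n → Bool, ((V x) y).toReal *
          (if DLB x ≤ DLB y then HLB δ y - HLB δ x else 0)))
      ≤ 2 * δ / n := by
  have : NeZero n := ⟨by omega⟩
  let i0 : Fin n := ⟨2 * m, by omega⟩
  set Q := ∑ g with SoleOneBelow (2 * m + 2) i0 g, (V (fun _ => false) g).toReal
  set K := 𝔼 u : Fin n → Bool, HLB δ (prefixOnes (2 * m + 2) u) - (2 * m + 2 - δ) + (δ - 2)
  have hQ : n * Q ≤ 1 :=
    mul_sum_soleOneBelow_le_one (p := i0) (by simp [i0]) (by simp [i0]; omega) _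
      (fun _ => ENNReal.toReal_nonneg) (PMF.sum_toReal_eq_one _)
      fun t g => by rw [hV.apply_zero_comp]
  have hK : K ≤ 2 * δ := by
    have := expect_HLB_prefixOnes_le he hδ0.le (L := 2 * m + 2) ⟨m + 1, by ring⟩ hm2
    push_cast at this
    linarith
  calc _ = ∑ b : Bool, (β b).toReal * (Q * K) := by
        simp only [PMF.sum_uniformOfFintype_toReal_mul]
        refine sum_congr rfl fun b _ => ?_
        rw [← expect_sum_gain_mixedBlockString hV (i1 := ⟨2 * m + 1, by omega⟩) rfl rfl b]
        rfl
    _ = Q * K := by rw [← sum_mul, PMF.sum_toReal_eq_one, one_mul]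
    _ ≤ Q * (2 * δ) := mul_le_mul_of_nonneg_left hK (sum_nonneg fun _ _ => ENNReal.toReal_nonneg)
    _ ≤ 2 * δ / n := by
        rw [le_div_iff₀ (by exact_mod_cast (show 0 < n by omega))]
        nlinarith

/-- **One-step progress bound from an even DLB value.** Let `n` be even and
positive, `m` an integer with `n/4 ≤ m ≤ n/2 - 1`, and `δ ∈ (0,2)`. Let `x` be a
random bit string with `DLB(x) = 2m` almost surely: its first `2m` bits are `1`,
its critical block is `(b, ¬b)` for a `Bool` `b` with an arbitrary distribution
`β`, and its remaining bits are independent, uniform, and independent of the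
critical block (realized via a uniformly random string `u`). Let `y` be obtained
from `x` by an arbitrary unary unbiased variation operator `V`, and let
`Y := (HLB_δ(y) - HLB_δ(x)) · 1_{DLB(y) ≥ DLB(x)}`. Then `E[Y] ≤ 2δ/n`. -/
theorem drift_from_even_DLB_value (n m : ℕ) (hn : 0 < n) (he : Even n)
    (hm1 : n ≤ 4 * m) (hm2 : 2 * m + 2 ≤ n)
    (δ : ℝ) (hδ0 : 0 < δ) (hδ2 : δ < 2)
    (β : PMF Bool)
    (V : (Fin n → Bool) → PMF (Fin n → Bool)) (hV : IsUnbiased V) :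
    (∑ b : Bool, (β b).toReal *
      ∑ u : Fin n → Bool, ((PMF.uniformOfFintype (Fin n → Bool)) u).toReal *
        (let x : Fin n → Bool := fun i =>
          if (i : ℕ) < 2 * m then true
          else if (i : ℕ) = 2 * m then b
          else if (i : ℕ) = 2 * m + 1 then !b
          else u i
        ∑ y : Fin n → Bool, ((V x) y).toReal *
          (if DLB x ≤ DLB y then HLB δ y - HLB δ x else 0)))
      ≤ 2 * δ / n :=
  drift_from_even_DLB_value_general n m he hm1 hm2 δ hδ0 β V hV
end

section
/- One-step drift of the Metropolis algorithm on DLB: Let n be an even positive integer and α > √2 + 1. For every x ∈ {0,1}^n with x ≠ (1,…,1), consider one step of the Metropolis algorithm with parameter α maximizing DLB started at x, i.e., the random state x' obtained as follows: choose i ∈ [1..n] uniformly at random, let y be x with bit i flipped, set x' = y with probability min(1, α^{DLB(y)−DLB(x)}) and x' = x otherwise. Then E[HLB_{3/2}(x') − HLB_{3/2}(x)] ≥ C(α)/n, where C(α) = (α⁴ − 6α² + 1)/(α(α² − 1)²). -/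
noncomputable def metroStep (n : ℕ) [NeZero n] (α : ℝ) (x : Fin n → Bool) :
    PMF (Fin n → Bool) :=
  (PMF.uniformOfFintype (Fin n)).bind fun i =>
    (PMF.bernoulli
        (Real.toNNReal (min 1
          (α ^ ((DLB (Function.update x i (!(x i))) : ℤ) - (DLB x : ℤ)))))
        (Real.toNNReal_le_one.mpr (min_le_left _ _))).bind fun b =>
      PMF.pure (if b then Function.update x i (!(x i)) else x)

/-!
Let `m` be the critical block of `x` and `DLB(x) = 2m + e` with `e ∈ {0, 1}`. Flipping a bit after
the critical block does not change `HLB`. Flipping a bit of the critical block gains at least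
`α^{-e}` in expectation: a `00` block becomes `01`/`10` (accepted with probability `1/α`, gain
`1/2` for either bit), while a `01`/`10` block gains `3/2` by completing it and loses `1/2` by
zeroing it, both accepted surely. Flipping a bit of the `j`-th leading `11` block makes that block
critical with `DLB = 2j`, so it is accepted with probability `α^{-e-2(m-j)}` and loses at most
`2(m-j)`. Hence `n · E[Δ] ≥ α^{-e} (1 - 4 ∑ k α^{-2k}) ≥ α⁻¹ (1 - 4α²/(α²-1)²) = C(α)`, and the
last bracket is nonnegative exactly when `α ≥ √2 + 1`.
-/

theorem PMF.sum_toReal_bind_mul {ι κ : Type*} [Fintype ι] [Fintype κ] (p : PMF ι)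
    (q : ι → PMF κ) (f : κ → ℝ) :
    ∑ b, ((p.bind q) b).toReal * f b = ∑ a, (p a).toReal * ∑ b, (q a b).toReal * f b := by
  have hbind : ∀ b, ((p.bind q) b).toReal = ∑ a, (p a).toReal * (q a b).toReal := fun b => by
    rw [PMF.bind_apply, tsum_fintype,
      ENNReal.toReal_sum fun a _ => ENNReal.mul_ne_top (p.apply_ne_top a) ((q a).apply_ne_top b)]
    simp_rw [ENNReal.toReal_mul]
  simp_rw [hbind, Finset.sum_mul, Finset.mul_sum, mul_assoc]
  exact Finset.sum_comm

theorem PMF.sum_toReal_pure_mul {κ : Type*} [Fintype κ] (a : κ) (f : κ → ℝ) :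
    ∑ b, ((PMF.pure a) b).toReal * f b = f a := by
  classical
  simp only [PMF.pure_apply, apply_ite ENNReal.toReal, ENNReal.toReal_one, ENNReal.toReal_zero,
    ite_mul, one_mul, zero_mul]
  exact Finset.sum_ite_eq' _ _ _ |>.trans (if_pos (Finset.mem_univ a))

theorem min_one_zpow_of_nonneg {α : ℝ} (hα : 1 ≤ α) {k : ℤ} (hk : 0 ≤ k) :
    min 1 (α ^ k) = 1 :=
  min_eq_left (one_le_zpow₀ hα hk)

theorem min_one_zpow_of_nonpos {α : ℝ} (hα : 1 ≤ α) {k : ℤ} (hk : k ≤ 0) :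
    min 1 (α ^ k) = α ^ k :=
  min_eq_right (zpow_le_one_of_nonpos₀ hα hk)

theorem sum_range_two_mul_comp_div_two {M : Type*} [AddCommMonoid M] (f : ℕ → M) (m : ℕ) :
    ∑ v ∈ Finset.range (2 * m), f (v / 2) = 2 • ∑ j ∈ Finset.range m, f j := by
  induction m with
  | zero => simp
  | succ m ih =>
    rw [show 2 * (m + 1) = 2 * m + 1 + 1 by ring, Finset.sum_range_succ, Finset.sum_range_succ, ih,
      Finset.sum_range_succ, smul_add, two_smul ℕ (f m), show (2 * m + 1) / 2 = m by omega,
      show 2 * m / 2 = m by omega, add_assoc]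

theorem sum_sub_mul_pow_sub_le {t : ℝ} (ht0 : 0 ≤ t) (ht1 : t < 1) (m : ℕ) :
    ∑ j ∈ Finset.range m, ((m - j : ℕ) : ℝ) * t ^ (m - j) ≤ t / (1 - t) ^ 2 := by
  have hreflect : ∑ j ∈ Finset.range m, ((m - j : ℕ) : ℝ) * t ^ (m - j) =
      ∑ k ∈ Finset.range (m + 1), (k : ℝ) * t ^ k := by
    rw [Finset.sum_range_succ', ← Finset.sum_range_reflect]
    simp only [Nat.cast_zero, zero_mul, add_zero]
    refine Finset.sum_congr rfl fun j hj => ?_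
    rw [show m - (m - 1 - j) = j + 1 by have := Finset.mem_range.mp hj; omega]
  rw [hreflect]
  exact sum_le_hasSum _ (fun k _ => by positivity)
    (hasSum_coe_mul_geometric_of_norm_lt_one (by rwa [Real.norm_of_nonneg ht0]))

theorem drift_constant_le_mul {α β S : ℝ} (hα : √2 + 1 < α) (hβ : α⁻¹ ≤ β)
    (hS : S ≤ (α ^ 2)⁻¹ / (1 - (α ^ 2)⁻¹) ^ 2) :
    (α ^ 4 - 6 * α ^ 2 + 1) / (α * (α ^ 2 - 1) ^ 2) ≤ β * (1 - 4 * S) := by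
  have hsqrt : √2 ^ 2 = 2 := Real.sq_sqrt (by norm_num)
  have hα1 : 1 < α := by nlinarith [Real.sqrt_nonneg 2]
  have hα2 : 0 < α ^ 2 - 1 := by nlinarith
  -- `√2 + 1` is the largest root of `α⁴ - 6α² + 1 = (α² - 2α - 1)(α² + 2α - 1)`
  have hfac : 0 < α ^ 2 - 2 * α - 1 := by nlinarith [Real.sqrt_nonneg 2]
  have hnum : 0 ≤ α ^ 4 - 6 * α ^ 2 + 1 := by
    nlinarith [mul_pos hfac (by nlinarith : 0 < α ^ 2 + 2 * α - 1)]
  have hS' : S ≤ α ^ 2 / (α ^ 2 - 1) ^ 2 := by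
    convert hS using 1
    field_simp
  have hQ : (α ^ 4 - 6 * α ^ 2 + 1) / (α ^ 2 - 1) ^ 2 ≤ 1 - 4 * S := by
    have : (α ^ 4 - 6 * α ^ 2 + 1) / (α ^ 2 - 1) ^ 2 = 1 - 4 * (α ^ 2 / (α ^ 2 - 1) ^ 2) := by
      field_simp
      ring
    linarith
  calc (α ^ 4 - 6 * α ^ 2 + 1) / (α * (α ^ 2 - 1) ^ 2)
      = α⁻¹ * ((α ^ 4 - 6 * α ^ 2 + 1) / (α ^ 2 - 1) ^ 2) := by
        field_simp
    _ ≤ β * ((α ^ 4 - 6 * α ^ 2 + 1) / (α ^ 2 - 1) ^ 2) :=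
        mul_le_mul_of_nonneg_right hβ (by positivity)
    _ ≤ β * (1 - 4 * S) :=
        mul_le_mul_of_nonneg_left hQ ((inv_pos.mpr (by linarith)).le.trans hβ)

theorem LOn_eq_of_first_false {n ℓ : ℕ} {z : ℕ → Bool} (hℓ : ℓ < n)
    (hpre : ∀ s < ℓ, z s = true) (hz : z ℓ = false) : LOn n z = ℓ := by
  rw [LOn, ← Finset.card_range ℓ]
  congr 1
  ext r
  simp only [Finset.mem_filter, Finset.mem_range]
  refine ⟨fun ⟨_, h⟩ => ?_, fun hr => ⟨hr.trans hℓ, fun s hs => hpre s (hs.trans_lt hr)⟩⟩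
  by_contra! hr
  simp [h ℓ hr] at hz

structure IsCriticalBlock (n : ℕ) (z : ℕ → Bool) (m : ℕ) : Prop where
  lt : 2 * m + 1 < n
  prefix_true : ∀ s < 2 * m, z s = true
  not_both_true : ¬(z (2 * m) = true ∧ z (2 * m + 1) = true)

theorem exists_isCriticalBlock {n : ℕ} {z : ℕ → Bool} (hn : Even n)
    (h : ¬∀ i < n, z i = true) : ∃ m, IsCriticalBlock n z m := by
  classical
  have hex : ∃ i, i < n ∧ z i = false := by simpa using h
  obtain ⟨hℓn, hℓ⟩ := Nat.find_spec hex
  refine ⟨Nat.find hex / 2, ?_, fun s hs => ?_, fun ⟨h0, h1⟩ => ?_⟩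
  · obtain ⟨k, rfl⟩ := hn
    omega
  · have := Nat.find_min hex (show s < Nat.find hex by omega)
    simpa [show s < n by omega] using this
  · have : z (Nat.find hex) = true := by
      rcases (show Nat.find hex = 2 * (Nat.find hex / 2) ∨
          Nat.find hex = 2 * (Nat.find hex / 2) + 1 by omega) with e | e <;> rw [e] <;> assumption
    simp [this] at hℓ

namespace IsCriticalBlock

variable {n m : ℕ} {z : ℕ → Bool}

theorem not_forall_true (h : IsCriticalBlock n z m) : ¬∀ i < n, z i = true := fun hall =>
  h.not_both_true ⟨hall _ (by have := h.lt; omega), hall _ h.lt⟩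

theorem LOn_div_two (h : IsCriticalBlock n z m) : LOn n z / 2 = m := by
  by_cases h0 : z (2 * m) = true
  · have h1 : z (2 * m + 1) = false := by simpa [h0] using h.not_both_true
    have hpre : ∀ s < 2 * m + 1, z s = true := fun s hs => by
      rcases Nat.lt_succ_iff_lt_or_eq.mp hs with hs | rfl
      exacts [h.prefix_true s hs, h0]
    rw [LOn_eq_of_first_false h.lt hpre h1]
    omega
  · rw [LOn_eq_of_first_false (by have := h.lt; omega) h.prefix_true (by simpa using h0)]
    omega

theorem DLBn_eq (h : IsCriticalBlock n z m) :
    DLBn n z = if z (2 * m) = false ∧ z (2 * m + 1) = false then 2 * m + 1 else 2 * m := by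
  rw [DLBn, if_neg h.not_forall_true, h.LOn_div_two]

theorem HLBn_eq (h : IsCriticalBlock n z m) (δ : ℝ) :
    HLBn n δ z =
      if z (2 * m) = false ∧ z (2 * m + 1) = false then 2 * (m : ℝ) else 2 * m + 2 - δ := by
  rw [HLBn, if_neg h.not_forall_true, h.LOn_div_two]
  push_cast
  rfl

theorem eval_of_false_false (h : IsCriticalBlock n z m) (δ : ℝ) (h0 : z (2 * m) = false)
    (h1 : z (2 * m + 1) = false) : DLBn n z = 2 * m + 1 ∧ HLBn n δ z = 2 * m := by
  simp [h.DLBn_eq, h.HLBn_eq, h0, h1]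

theorem eval_of_ne (h : IsCriticalBlock n z m) (δ : ℝ) (hne : z (2 * m) ≠ z (2 * m + 1)) :
    DLBn n z = 2 * m ∧ HLBn n δ z = 2 * m + 2 - δ := by
  have : ¬(z (2 * m) = false ∧ z (2 * m + 1) = false) := fun ⟨h0, h1⟩ => hne (h0.trans h1.symm)
  simp [h.DLBn_eq, h.HLBn_eq, this]

theorem of_eqOn {z' : ℕ → Bool} (h : IsCriticalBlock n z m) (hz : ∀ s < 2 * m + 2, z' s = z s) :
    IsCriticalBlock n z' m where
  lt := h.lt
  prefix_true s hs := (hz s (by omega)).trans (h.prefix_true s hs)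
  not_both_true := by rw [hz _ (by omega), hz _ (by omega)]; exact h.not_both_true

theorem HLBn_congr {z' : ℕ → Bool} (h : IsCriticalBlock n z m) (δ : ℝ)
    (hz : ∀ s < 2 * m + 2, z' s = z s) : HLBn n δ z' = HLBn n δ z := by
  rw [(h.of_eqOn hz).HLBn_eq, h.HLBn_eq, hz _ (by omega), hz _ (by omega)]

end IsCriticalBlock

theorem le_DLBn_HLBn {n k : ℕ} {z : ℕ → Bool} {δ : ℝ} (hn : Even n) (hk : 2 * k ≤ n)
    (hδ : δ ≤ 2) (hpre : ∀ s < 2 * k, z s = true) :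
    2 * k ≤ DLBn n z ∧ 2 * (k : ℝ) ≤ HLBn n δ z := by
  by_cases hall : ∀ i < n, z i = true
  · simp only [DLBn, HLBn, if_pos hall]
    exact ⟨hk, by exact_mod_cast hk⟩
  obtain ⟨m, hm⟩ := exists_isCriticalBlock hn hall
  have hkm : k ≤ m := by
    by_contra!
    exact hm.not_both_true ⟨hpre _ (by omega), hpre _ (by omega)⟩
  have hkm' : (k : ℝ) ≤ m := by exact_mod_cast hkm
  rw [hm.DLBn_eq, hm.HLBn_eq]
  constructor <;> split_ifs <;> first | omega | linarith

def flipBit (z : ℕ → Bool) (v : ℕ) : ℕ → Bool := Function.update z v (!z v)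

section flipBit

variable {n m s v : ℕ} {z : ℕ → Bool}

@[simp]
theorem flipBit_self : flipBit z v v = !z v := Function.update_self ..

theorem flipBit_of_ne (h : s ≠ v) : flipBit z v s = z s := Function.update_of_ne h ..

theorem flipBit_eq_not_of_ne (hne : z (2 * m) ≠ z (2 * m + 1)) (hs : s / 2 = m)
    (hv : v / 2 = m) : flipBit z v s = !z v := by
  by_cases hsv : s = v
  · rw [hsv, flipBit_self]
  rw [flipBit_of_ne hsv]
  rcases (show v = 2 * m ∨ v = 2 * m + 1 by omega) with rfl | rfl <;>
    rcases (show s = 2 * m ∨ s = 2 * m + 1 by omega) with rfl | rfl <;>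
    cases hz : z (2 * m) <;> simp_all

theorem eval_flipBit_of_block_eq (δ : ℝ) (hm : 2 * m + 1 < n) (hpre : ∀ s < 2 * m, z s = true)
    (hblock : z (2 * m) = z (2 * m + 1)) (hv : v / 2 = m) :
    DLBn n (flipBit z v) = 2 * m ∧ HLBn n δ (flipBit z v) = 2 * m + 2 - δ := by
  have hpre' : ∀ s < 2 * m, flipBit z v s = true := fun s hs => by
    rw [flipBit_of_ne (by omega)]
    exact hpre s hs
  have hne : flipBit z v (2 * m) ≠ flipBit z v (2 * m + 1) := by
    rcases (show v = 2 * m ∨ v = 2 * m + 1 by omega) with rfl | rfl <;>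
      rw [flipBit_self, flipBit_of_ne (by omega), hblock] <;> simp
  exact IsCriticalBlock.eval_of_ne ⟨hm, hpre', fun ⟨h0, h1⟩ => hne (h0.trans h1.symm)⟩ δ hne

namespace IsCriticalBlock

theorem eval_flipBit_of_lt (h : IsCriticalBlock n z m) (δ : ℝ) (hv : v < 2 * m) :
    DLBn n (flipBit z v) = 2 * (v / 2) ∧
      HLBn n δ (flipBit z v) = 2 * ((v / 2 : ℕ) : ℝ) + 2 - δ :=
  eval_flipBit_of_block_eq δ (by have := h.lt; omega) (fun s hs => h.prefix_true s (by omega))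
    (by rw [h.prefix_true _ (by omega), h.prefix_true _ (by omega)]) rfl

theorem eval_flipBit_of_false_false (h : IsCriticalBlock n z m) (δ : ℝ)
    (h0 : z (2 * m) = false) (h1 : z (2 * m + 1) = false) (hv : v / 2 = m) :
    DLBn n (flipBit z v) = 2 * m ∧ HLBn n δ (flipBit z v) = 2 * m + 2 - δ :=
  eval_flipBit_of_block_eq δ h.lt h.prefix_true (h0.trans h1.symm) hv

theorem HLBn_flipBit_of_le (h : IsCriticalBlock n z m) (δ : ℝ) (hv : 2 * m + 2 ≤ v) :
    HLBn n δ (flipBit z v) = HLBn n δ z :=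
  h.HLBn_congr δ fun _ _ => flipBit_of_ne (by omega)

theorem eval_flipBit_of_true (h : IsCriticalBlock n z m) (δ : ℝ)
    (hne : z (2 * m) ≠ z (2 * m + 1)) (hv : v / 2 = m) (hzv : z v = true) :
    DLBn n (flipBit z v) = 2 * m + 1 ∧ HLBn n δ (flipBit z v) = 2 * m := by
  have hblock : ∀ s, s / 2 = m → flipBit z v s = false := fun s hs => by
    rw [flipBit_eq_not_of_ne hne hs hv, hzv]
    rfl
  have hc : IsCriticalBlock n (flipBit z v) m :=
    ⟨h.lt, fun s hs => (flipBit_of_ne (by omega)).trans (h.prefix_true s hs), by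
      simp [hblock (2 * m) (by omega)]⟩
  exact hc.eval_of_false_false δ (hblock _ (by omega)) (hblock _ (by omega))

theorem le_eval_flipBit_of_false (hn : Even n) (h : IsCriticalBlock n z m) {δ : ℝ} (hδ : δ ≤ 2)
    (hne : z (2 * m) ≠ z (2 * m + 1)) (hv : v / 2 = m) (hzv : z v = false) :
    2 * m + 2 ≤ DLBn n (flipBit z v) ∧ 2 * (m : ℝ) + 2 ≤ HLBn n δ (flipBit z v) := by
  have hpre : ∀ s < 2 * (m + 1), flipBit z v s = true := fun s hs => by
    rcases Nat.lt_or_ge s (2 * m) with hs' | hs'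
    · rw [flipBit_of_ne (by omega)]
      exact h.prefix_true s hs'
    · rw [flipBit_eq_not_of_ne hne (by omega) hv, hzv]
      rfl
  have := le_DLBn_HLBn (k := m + 1) hn (by have := h.lt; omega) hδ hpre
  push_cast at this
  exact ⟨by omega, by linarith⟩

end IsCriticalBlock

end flipBit

noncomputable def flipGain (n : ℕ) (α : ℝ) (z : ℕ → Bool) (v : ℕ) : ℝ :=
  min 1 (α ^ ((DLBn n (flipBit z v) : ℤ) - DLBn n z)) *
    (HLBn n (3 / 2) (flipBit z v) - HLBn n (3 / 2) z)

namespace IsCriticalBlock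

variable {n m v : ℕ} {z : ℕ → Bool} {α : ℝ}

theorem flipGain_of_le (h : IsCriticalBlock n z m) (hv : 2 * m + 2 ≤ v) :
    flipGain n α z v = 0 := by
  rw [flipGain, h.HLBn_flipBit_of_le _ hv, sub_self, mul_zero]

theorem neg_le_flipGain_of_lt (h : IsCriticalBlock n z m) (hα : 1 ≤ α) (hv : v < 2 * m) :
    -(2 * ((m - v / 2 : ℕ) : ℝ) * ((α ^ 2)⁻¹) ^ (m - v / 2) * α ^ (2 * (m : ℤ) - DLBn n z)) ≤
      flipGain n α z v := by
  obtain ⟨hD, hH⟩ := h.eval_flipBit_of_lt (3 / 2) hv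
  have hjm : v / 2 ≤ m := by omega
  have hDz : 2 * m ≤ DLBn n z ∧ HLBn n (3 / 2) z ≤ 2 * m + 1 / 2 := by
    rw [h.DLBn_eq, h.HLBn_eq]
    split_ifs <;> constructor <;> first | omega | linarith
  have hprob : α ^ ((DLBn n (flipBit z v) : ℤ) - DLBn n z) =
      ((α ^ 2)⁻¹) ^ (m - v / 2) * α ^ (2 * (m : ℤ) - DLBn n z) := by
    rw [hD, inv_pow, ← pow_mul, ← zpow_natCast, ← zpow_neg, ← zpow_add₀ (by positivity)]
    push_cast [hjm]
    ring_nf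
  have hloss :
      -(2 * ((m - v / 2 : ℕ) : ℝ)) ≤ HLBn n (3 / 2) (flipBit z v) - HLBn n (3 / 2) z := by
    rw [hH]
    push_cast [hjm]
    linarith
  rw [flipGain, min_one_zpow_of_nonpos hα (by omega), hprob]
  calc _ = ((α ^ 2)⁻¹) ^ (m - v / 2) * α ^ (2 * (m : ℤ) - DLBn n z) *
        -(2 * ((m - v / 2 : ℕ) : ℝ)) := by ring
    _ ≤ _ := mul_le_mul_of_nonneg_left hloss (by positivity)

theorem le_flipGain_add_flipGain (hn : Even n) (h : IsCriticalBlock n z m) (hα : 1 < α) :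
    α ^ (2 * (m : ℤ) - DLBn n z) ≤ flipGain n α z (2 * m) + flipGain n α z (2 * m + 1) := by
  by_cases h00 : z (2 * m) = false ∧ z (2 * m + 1) = false
  · obtain ⟨hD, hH⟩ := h.eval_of_false_false (3 / 2) h00.1 h00.2
    have hβ : α ^ (2 * (m : ℤ) - DLBn n z) = α⁻¹ := by
      rw [hD, Nat.cast_add, Nat.cast_mul, Nat.cast_ofNat, Nat.cast_one, sub_add_cancel_left,
        zpow_neg_one]
    have hgain : ∀ v, v / 2 = m → flipGain n α z v = α⁻¹ / 2 := fun v hv => by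
      obtain ⟨hD', hH'⟩ := h.eval_flipBit_of_false_false (3 / 2) h00.1 h00.2 hv
      rw [flipGain, hD', Nat.cast_mul, Nat.cast_ofNat, min_one_zpow_of_nonpos hα.le (by omega),
        hβ, hH', hH]
      ring
    rw [hgain _ (by omega), hgain _ (by omega), add_halves, hβ]
  · have hne : z (2 * m) ≠ z (2 * m + 1) := by
      have := h.not_both_true
      cases hz0 : z (2 * m) <;> cases hz1 : z (2 * m + 1) <;> simp_all
    obtain ⟨hD, hH⟩ := h.eval_of_ne (3 / 2) hne
    have hgain : ∀ v, v / 2 = m → (if z v then -1 / 2 else 3 / 2 : ℝ) ≤ flipGain n α z v :=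
      fun v hv => by
        cases hzv : z v
        · obtain ⟨hD', hH'⟩ := h.le_eval_flipBit_of_false hn (δ := 3 / 2) (by norm_num) hne hv hzv
          rw [flipGain, min_one_zpow_of_nonneg hα.le (by omega), hH]
          simp only [Bool.false_eq_true, if_false, one_mul]
          linarith
        · obtain ⟨hD', hH'⟩ := h.eval_flipBit_of_true (3 / 2) hne hv hzv
          rw [flipGain, hD', hH', hD, hH, min_one_zpow_of_nonneg hα.le (by omega)]
          simp only [if_true]
          linarith
    have h0 := hgain (2 * m) (by omega)
    have h1 := hgain (2 * m + 1) (by omega)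
    rw [hD, Nat.cast_mul, Nat.cast_ofNat, sub_self, zpow_zero]
    cases hz0 : z (2 * m) <;> cases hz1 : z (2 * m + 1) <;> simp_all <;> linarith

theorem sum_flipGain_ge (hn : Even n) (h : IsCriticalBlock n z m) (hα : 1 < α) :
    α ^ (2 * (m : ℤ) - DLBn n z) *
        (1 - 4 * ∑ j ∈ Finset.range m, ((m - j : ℕ) : ℝ) * ((α ^ 2)⁻¹) ^ (m - j)) ≤
      ∑ v ∈ Finset.range n, flipGain n α z v := by
  set β := α ^ (2 * (m : ℤ) - DLBn n z)
  set S := ∑ j ∈ Finset.range m, ((m - j : ℕ) : ℝ) * ((α ^ 2)⁻¹) ^ (m - j)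
  have hm : 2 * m + 2 ≤ n := by
    have := h.lt
    obtain ⟨k, rfl⟩ := hn
    omega
  have hsplit : ∑ v ∈ Finset.range n, flipGain n α z v = ∑ v ∈ Finset.range (2 * m),
      flipGain n α z v + (flipGain n α z (2 * m) + flipGain n α z (2 * m + 1)) := by
    rw [← Finset.sum_range_add_sum_Ico _ hm,
      Finset.sum_eq_zero fun v hv => h.flipGain_of_le (Finset.mem_Ico.mp hv).1, add_zero,
      Finset.sum_range_succ, Finset.sum_range_succ, add_assoc]
  have hlow := Finset.sum_le_sum fun v hv =>
    h.neg_le_flipGain_of_lt (α := α) hα.le (Finset.mem_range.mp hv)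
  rw [sum_range_two_mul_comp_div_two
    (fun j => -(2 * ((m - j : ℕ) : ℝ) * ((α ^ 2)⁻¹) ^ (m - j) * β)), nsmul_eq_mul,
    Nat.cast_ofNat, Finset.sum_neg_distrib, ← Finset.sum_mul] at hlow
  have hS : ∑ j ∈ Finset.range m, 2 * ((m - j : ℕ) : ℝ) * ((α ^ 2)⁻¹) ^ (m - j) = 2 * S := by
    rw [Finset.mul_sum]
    exact Finset.sum_congr rfl fun _ _ => by ring
  rw [hS] at hlow
  linarith [h.le_flipGain_add_flipGain hn hα]

theorem drift_constant_le_sum_flipGain (hn : Even n) (h : IsCriticalBlock n z m)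
    (hα : √2 + 1 < α) :
    (α ^ 4 - 6 * α ^ 2 + 1) / (α * (α ^ 2 - 1) ^ 2) ≤ ∑ v ∈ Finset.range n, flipGain n α z v := by
  have hα1 : 1 < α := by linarith [Real.sqrt_nonneg 2]
  have hβ : α⁻¹ ≤ α ^ (2 * (m : ℤ) - DLBn n z) := by
    have : DLBn n z ≤ 2 * m + 1 := by
      rw [h.DLBn_eq]
      split_ifs <;> omega
    rw [← zpow_neg_one]
    exact zpow_le_zpow_right₀ hα1.le (by omega)
  have ht : (α ^ 2)⁻¹ < 1 := inv_lt_one_of_one_lt₀ (one_lt_pow₀ hα1 two_ne_zero)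
  exact (drift_constant_le_mul hα hβ (sum_sub_mul_pow_sub_le (by positivity) ht m)).trans
    (h.sum_flipGain_ge hn hα1)

end IsCriticalBlock

set_option linter.deprecated false in
theorem sum_metroStep_toReal_mul (n : ℕ) [NeZero n] {α : ℝ} (hα : 0 ≤ α) (x : Fin n → Bool)
    (f : (Fin n → Bool) → ℝ) (hf : f x = 0) :
    ∑ x', (metroStep n α x x').toReal * f x' = (n : ℝ)⁻¹ * ∑ i,
      min 1 (α ^ ((DLB (Function.update x i (!x i)) : ℤ) - DLB x)) *
        f (Function.update x i (!x i)) := by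
  rw [metroStep, PMF.sum_toReal_bind_mul, Finset.mul_sum]
  refine Finset.sum_congr rfl fun i _ => ?_
  rw [PMF.sum_toReal_bind_mul, Fintype.sum_bool, PMF.sum_toReal_pure_mul, PMF.sum_toReal_pure_mul]
  simp [PMF.bernoulli_apply, hf, zpow_nonneg hα]

theorem toNatFun_update_not {n : ℕ} (x : Fin n → Bool) (i : Fin n) :
    toNatFun (Function.update x i (!x i)) = flipBit (toNatFun x) i := by
  funext j
  by_cases hj : j < n
  · by_cases hji : j = i
    · subst hji
      simp [toNatFun, flipBit, hj]
    · rw [flipBit_of_ne hji]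
      simp only [toNatFun, dif_pos hj]
      exact Function.update_of_ne (fun h => hji (congrArg Fin.val h)) ..
  · rw [flipBit_of_ne (by omega)]
    simp only [toNatFun, dif_neg hj]

theorem sum_metroStep_toReal_mul_HLB_sub (n : ℕ) [NeZero n] {α : ℝ} (hα : 0 ≤ α)
    (x : Fin n → Bool) :
    ∑ x', (metroStep n α x x').toReal * (HLB (3 / 2) x' - HLB (3 / 2) x) =
      (n : ℝ)⁻¹ * ∑ v ∈ Finset.range n, flipGain n α (toNatFun x) v := by
  rw [sum_metroStep_toReal_mul n hα x _ (sub_self _), ← Fin.sum_univ_eq_sum_range]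
  simp only [flipGain, DLB, HLB, toNatFun_update_not]

/-- **One-step drift of the Metropolis algorithm on DLB.** Let `n` be an even
positive integer and `α > √2 + 1`. For every non-optimal `x ∈ {0,1}^n`, the
expected one-step gain in `HLB_{3/2}` of the Metropolis algorithm with parameter
`α` on `DLB` started at `x` is at least `C(α)/n`, where
`C(α) = (α⁴ - 6α² + 1)/(α(α² - 1)²)`. -/
theorem metropolis_one_step_drift (n : ℕ) [NeZero n] (he : Even n)
    (α : ℝ) (hα : Real.sqrt 2 + 1 < α)
    (x : Fin n → Bool) (hx : x ≠ fun _ => true) :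
    (α ^ 4 - 6 * α ^ 2 + 1) / (α * (α ^ 2 - 1) ^ 2) / n ≤
      ∑ x' : Fin n → Bool, ((metroStep n α x) x').toReal *
        (HLB (3 / 2) x' - HLB (3 / 2) x) := by
  have hx' : ¬∀ i < n, toNatFun x i = true := fun hall =>
    hx (funext fun i => by simpa [toNatFun] using hall i i.isLt)
  obtain ⟨m, hm⟩ := exists_isCriticalBlock he hx'
  rw [sum_metroStep_toReal_mul_HLB_sub n (by linarith [Real.sqrt_nonneg 2]) x, div_eq_inv_mul]
  exact mul_le_mul_of_nonneg_left (hm.drift_constant_le_sum_flipGain he hα) (by positivity)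
end

section
/- Runtime of the Metropolis algorithm on DLB: Let n be an even positive integer and α > √2 + 1. Consider the Metropolis algorithm with parameter α maximizing DLB, i.e., the Markov chain on {0,1}^n whose one-step transition from a state x is: choose i ∈ [1..n] uniformly at random, let y be x with bit i flipped, move to y with probability min(1, α^{DLB(y)−DLB(x)}) and stay at x otherwise. Then, from any initial state, the expected number of steps until the chain first reaches the optimum (1,…,1) is at most n²/C(α), where C(α) = (α⁴ − 6α² + 1)/(α(α² − 1)²) > 0. -/
/-- `t`-fold iteration of a Markov transition rule `step`, started at `x`. -/
noncomputable def iterStep {S : Type*} (step : S → PMF S) : ℕ → S → PMF S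
  | 0, x => PMF.pure x
  | t + 1, x => (iterStep step t x).bind step

/-!
Additive drift for the potential `n - HLB_δ ∈ [0, n]` with `δ = (3α² + 1)/(2α²)`. Off the
optimum only the critical block `m` and the `m` full blocks before it matter. In a `00` block
both critical flips are accepted with probability `1/α` and raise `HLB_δ` by `2 - δ`; in a
`01`/`10` block one flip completes the block (gain `≥ δ`), the other is accepted and loses
`2 - δ`.
Breaking the full block `k < m` loses `O(m - k)` but is accepted only with probability
`α^(-2(m - k))`, so all such moves together cost a convergent geometric series. Hence `HLB_δ`
grows in expectation by at least `C(α)/n` per step, and the hitting time is at most `n²/C(α)`.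
-/

namespace PMF

variable {S : Type*} [Fintype S]

noncomputable def expect (p : PMF S) (g : S → ℝ) : ℝ := ∑ z, (p z).toReal * g z

lemma sum_toReal_eq_one_s8 (p : PMF S) : ∑ z, (p z).toReal = 1 := by
  have h := p.tsum_coe
  rw [tsum_fintype] at h
  rw [← ENNReal.toReal_sum fun z _ => p.apply_ne_top z, h, ENNReal.toReal_one]

lemma expect_nonneg (p : PMF S) {g : S → ℝ} (hg : ∀ z, 0 ≤ g z) : 0 ≤ p.expect g :=
  Finset.sum_nonneg fun z _ => mul_nonneg ENNReal.toReal_nonneg (hg z)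

lemma expect_pure (x : S) (g : S → ℝ) : (pure x).expect g = g x := by
  classical
  simp [expect, pure_apply, apply_ite ENNReal.toReal]

lemma expect_bind {A : Type*} [Fintype A] (p : PMF A) (f : A → PMF S) (g : S → ℝ) :
    (p.bind f).expect g = ∑ a, (p a).toReal * (f a).expect g := by
  simp only [expect, bind_apply, tsum_fintype, Finset.mul_sum]
  rw [Finset.sum_comm]
  refine Finset.sum_congr rfl fun z _ => ?_
  rw [ENNReal.toReal_sum fun a _ => ENNReal.mul_ne_top (p.apply_ne_top a) ((f a).apply_ne_top z),
    Finset.sum_mul]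
  simp only [ENNReal.toReal_mul, mul_assoc]

lemma expect_bernoulli_bind_ite (r : NNReal) (h : r ≤ 1) (a c : S) (g : S → ℝ) :
    ((bernoulli r h).bind fun b => pure (if b then a else c)).expect g
      = r * g a + (1 - r) * g c := by
  rw [expect_bind, Fintype.sum_bool]
  simp [expect_pure, bernoulli_apply,
    ENNReal.toReal_sub_of_le (ENNReal.coe_le_one_iff.2 h) ENNReal.one_ne_top]

end PMF

section AdditiveDrift

variable {S : Type*} [Fintype S] {step : S → PMF S} {opt : S} {g : S → ℝ} {c : ℝ}

lemma expect_bind_add_le_of_drift (hopt : (step opt).expect g ≤ g opt)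
    (hdrift : ∀ x ≠ opt, (step x).expect g + c ≤ g x) (p : PMF S) :
    (p.bind step).expect g + c * (1 - p opt).toReal ≤ p.expect g := by
  classical
  have hmiss : (1 - p opt).toReal = ∑ z, (p z).toReal * if z = opt then 0 else 1 := by
    have hsum := p.sum_toReal_eq_one_s8
    rw [← Finset.add_sum_erase _ _ (Finset.mem_univ opt)] at hsum
    rw [ENNReal.toReal_sub_of_le (p.coe_le_one opt) ENNReal.one_ne_top, ENNReal.toReal_one,
      ← Finset.add_sum_erase _ _ (Finset.mem_univ opt), if_pos rfl, mul_zero, zero_add,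
      Finset.sum_congr rfl fun z hz => by rw [if_neg (Finset.ne_of_mem_erase hz), mul_one]]
    linarith
  rw [PMF.expect_bind, hmiss, Finset.mul_sum, ← Finset.sum_add_distrib, PMF.expect]
  refine Finset.sum_le_sum fun z _ => ?_
  rw [mul_left_comm, ← mul_add]
  refine mul_le_mul_of_nonneg_left ?_ ENNReal.toReal_nonneg
  split_ifs with hz
  · simpa [hz] using hopt
  · simpa using hdrift z hz

theorem tsum_one_sub_iterStep_le_of_drift (hc : 0 < c) (hg : ∀ x, 0 ≤ g x)
    (hopt : (step opt).expect g ≤ g opt) (hdrift : ∀ x ≠ opt, (step x).expect g + c ≤ g x)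
    (x₀ : S) :
    ∑' t, (1 - iterStep step t x₀ opt) ≤ ENNReal.ofReal (g x₀ / c) := by
  classical
  have htelescope : ∀ T, (iterStep step T x₀).expect g
      + c * ∑ t ∈ Finset.range T, (1 - iterStep step t x₀ opt).toReal ≤ g x₀ := by
    intro T
    induction T with
    | zero => simp [iterStep, PMF.expect_pure]
    | succ T ih =>
      have := expect_bind_add_le_of_drift hopt hdrift (iterStep step T x₀)
      rw [Finset.sum_range_succ, mul_add]
      exact le_trans (by simp only [iterStep]; linarith) ih
  refine ENNReal.tsum_le_of_sum_range_le fun T => ?_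
  rw [ENNReal.le_ofReal_iff_toReal_le (ENNReal.sum_ne_top.2 fun t _ => by simp)
    (div_nonneg (hg x₀) hc.le), ENNReal.toReal_sum fun t _ => by simp, le_div_iff₀ hc]
  nlinarith [htelescope T, (iterStep step T x₀).expect_nonneg hg]

end AdditiveDrift

namespace Bool

lemma eq_false_or_eq_false_of_ne {a b : Bool} (h : a ≠ b) : a = false ∨ b = false := by
  cases a <;> cases b <;> simp_all

lemma eq_false_and_eq_false_or_ne {a b : Bool} (h : a = false ∨ b = false) :
    (a = false ∧ b = false) ∨ a ≠ b := by
  cases a <;> cases b <;> simp_all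

end Bool

/- Throughout, `m` is the critical block of `x` when `2 * m + 1 < n`, `x` is `true` below `2 * m`
and the block `(x (2 * m), x (2 * m + 1))` is not `11`. -/
section Blocks

variable {n m : ℕ} {δ : ℝ} {x : ℕ → Bool}

lemma LOn_eq_of_first_false_s8 {k : ℕ} (hk : k ≤ n) (hpre : ∀ s < k, x s = true)
    (hxk : x k = false) : LOn n x = k := by
  have hfilter : (Finset.range n).filter (fun r => ∀ s ≤ r, x s = true) = Finset.range k := by
    ext r
    simp only [Finset.mem_filter, Finset.mem_range]
    constructor
    · rintro ⟨-, hr⟩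
      by_contra! hkr
      simp [hr k hkr] at hxk
    · exact fun hrk => ⟨hrk.trans_le hk, fun s hs => hpre s (hs.trans_lt hrk)⟩
  rw [LOn, hfilter, Finset.card_range]

lemma LOn_div_two_of_block (hm : 2 * m + 1 < n) (hpre : ∀ s < 2 * m, x s = true)
    (hblk : x (2 * m) = false ∨ x (2 * m + 1) = false) : LOn n x / 2 = m := by
  by_cases h0 : x (2 * m) = false
  · rw [LOn_eq_of_first_false_s8 (by omega) hpre h0]
    omega
  · have hpre' : ∀ s < 2 * m + 1, x s = true := fun s hs => by
      rcases (show s < 2 * m ∨ s = 2 * m by omega) with hs | rfl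
      · exact hpre s hs
      · simpa using h0
    rw [LOn_eq_of_first_false_s8 hm.le hpre' (hblk.resolve_left h0)]
    omega

lemma not_forall_of_block (hm : 2 * m + 1 < n)
    (hblk : x (2 * m) = false ∨ x (2 * m + 1) = false) : ¬ ∀ i < n, x i = true := fun h => by
  rcases hblk with h' | h'
  · simp [h (2 * m) (by omega)] at h'
  · simp [h (2 * m + 1) (by omega)] at h'

lemma DLBn_of_block_00 (hm : 2 * m + 1 < n) (hpre : ∀ s < 2 * m, x s = true)
    (h0 : x (2 * m) = false) (h1 : x (2 * m + 1) = false) : DLBn n x = 2 * m + 1 := by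
  rw [DLBn, if_neg (not_forall_of_block hm (.inl h0)),
    LOn_div_two_of_block hm hpre (.inl h0), if_pos ⟨h0, h1⟩]

lemma HLBn_of_block_00 (hm : 2 * m + 1 < n) (hpre : ∀ s < 2 * m, x s = true)
    (h0 : x (2 * m) = false) (h1 : x (2 * m + 1) = false) : HLBn n δ x = 2 * m := by
  rw [HLBn, if_neg (not_forall_of_block hm (.inl h0)),
    LOn_div_two_of_block hm hpre (.inl h0), if_pos ⟨h0, h1⟩]
  push_cast
  rfl

lemma DLBn_of_block_mixed (hm : 2 * m + 1 < n) (hpre : ∀ s < 2 * m, x s = true)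
    (hne : x (2 * m) ≠ x (2 * m + 1)) : DLBn n x = 2 * m := by
  have hblk := Bool.eq_false_or_eq_false_of_ne hne
  rw [DLBn, if_neg (not_forall_of_block hm hblk), LOn_div_two_of_block hm hpre hblk,
    if_neg fun h => hne (h.1.trans h.2.symm)]

lemma HLBn_of_block_mixed (hm : 2 * m + 1 < n) (hpre : ∀ s < 2 * m, x s = true)
    (hne : x (2 * m) ≠ x (2 * m + 1)) : HLBn n δ x = 2 * m + 2 - δ := by
  have hblk := Bool.eq_false_or_eq_false_of_ne hne
  rw [HLBn, if_neg (not_forall_of_block hm hblk), LOn_div_two_of_block hm hpre hblk,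
    if_neg fun h => hne (h.1.trans h.2.symm)]
  push_cast
  rfl

lemma exists_block (he : Even n) (h : ¬ ∀ i < n, x i = true) :
    ∃ m, 2 * m + 1 < n ∧ (∀ s < 2 * m, x s = true) ∧
      (x (2 * m) = false ∨ x (2 * m + 1) = false) := by
  classical
  have hex : ∃ k, k < n ∧ x k = false := by simpa using h
  obtain ⟨hkn, hk⟩ := Nat.find_spec hex
  have hpre : ∀ s < Nat.find hex, x s = true := fun s hs => by
    simpa [hkn.trans' hs] using Nat.find_min hex hs
  obtain ⟨c, rfl⟩ := he
  refine ⟨Nat.find hex / 2, by omega, fun s hs => hpre s (by omega), ?_⟩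
  rcases Nat.even_or_odd' (Nat.find hex) with ⟨j, hj | hj⟩
  · left; rwa [show 2 * (Nat.find hex / 2) = Nat.find hex by omega]
  · right; rwa [show 2 * (Nat.find hex / 2) + 1 = Nat.find hex by omega]

lemma le_of_block_of_prefix (hpre : ∀ s < 2 * m, x s = true) {m' : ℕ}
    (hblk : x (2 * m') = false ∨ x (2 * m' + 1) = false) : m ≤ m' := by
  by_contra! h
  rcases hblk with h' | h'
  · simp [hpre (2 * m') (by omega)] at h'
  · simp [hpre (2 * m' + 1) (by omega)] at h'

lemma two_mul_le_DLBn (he : Even n) (hm : 2 * m ≤ n) (hpre : ∀ s < 2 * m, x s = true) :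
    2 * m ≤ DLBn n x := by
  by_cases hall : ∀ i < n, x i = true
  · rwa [DLBn, if_pos hall]
  obtain ⟨m', hm', hpre', hblk'⟩ := exists_block he hall
  have := le_of_block_of_prefix hpre hblk'
  rcases Bool.eq_false_and_eq_false_or_ne hblk' with ⟨h0, h1⟩ | hne
  · rw [DLBn_of_block_00 hm' hpre' h0 h1]; omega
  · rw [DLBn_of_block_mixed hm' hpre' hne]; omega

lemma two_mul_le_HLBn (he : Even n) (hδ : δ ≤ 2) (hm : 2 * m ≤ n)
    (hpre : ∀ s < 2 * m, x s = true) : (2 * m : ℝ) ≤ HLBn n δ x := by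
  by_cases hall : ∀ i < n, x i = true
  · rw [HLBn, if_pos hall]; exact_mod_cast hm
  obtain ⟨m', hm', hpre', hblk'⟩ := exists_block he hall
  have : (m : ℝ) ≤ m' := by exact_mod_cast le_of_block_of_prefix hpre hblk'
  rcases Bool.eq_false_and_eq_false_or_ne hblk' with ⟨h0, h1⟩ | hne
  · rw [HLBn_of_block_00 hm' hpre' h0 h1]; linarith
  · rw [HLBn_of_block_mixed hm' hpre' hne]; linarith

lemma HLBn_nonneg (he : Even n) (hδ : δ ≤ 2) : 0 ≤ HLBn n δ x := by
  simpa using two_mul_le_HLBn (m := 0) he hδ n.zero_le (by simp)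

lemma HLBn_le (he : Even n) (hδ : 0 ≤ δ) : HLBn n δ x ≤ n := by
  by_cases hall : ∀ i < n, x i = true
  · rw [HLBn, if_pos hall]
  obtain ⟨m, hm, hpre, hblk⟩ := exists_block he hall
  have hmn : (2 * m + 2 : ℝ) ≤ n := by
    obtain ⟨c, rfl⟩ := he
    exact_mod_cast (show 2 * m + 2 ≤ c + c by omega)
  rcases Bool.eq_false_and_eq_false_or_ne hblk with ⟨h0, h1⟩ | hne
  · rw [HLBn_of_block_00 hm hpre h0 h1]; linarith
  · rw [HLBn_of_block_mixed hm hpre hne]; linarith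

lemma HLBn_congr_of_block (hm : 2 * m + 1 < n) (hpre : ∀ s < 2 * m, x s = true)
    (hblk : x (2 * m) = false ∨ x (2 * m + 1) = false) {y : ℕ → Bool}
    (hxy : ∀ s < 2 * m + 2, y s = x s) : HLBn n δ y = HLBn n δ x := by
  have hpre' : ∀ s < 2 * m, y s = true := fun s hs => (hxy s (by omega)).trans (hpre s hs)
  have h0 := hxy (2 * m) (by omega)
  have h1 := hxy (2 * m + 1) (by omega)
  have hblk' : y (2 * m) = false ∨ y (2 * m + 1) = false := by rwa [h0, h1]
  rw [HLBn, HLBn, if_neg (not_forall_of_block hm hblk), if_neg (not_forall_of_block hm hblk'),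
    LOn_div_two_of_block hm hpre hblk, LOn_div_two_of_block hm hpre' hblk', h0, h1]

end Blocks

lemma min_one_zpow_sub_of_le {α : ℝ} (hα : 1 ≤ α) {a b : ℕ} (h : a ≤ b) :
    min 1 (α ^ ((a : ℤ) - b)) = α ^ a / α ^ b := by
  rw [zpow_sub₀ (by positivity), zpow_natCast, zpow_natCast]
  exact min_eq_right <| div_le_one_of_le₀ (pow_le_pow_right₀ hα h) (by positivity)

lemma min_one_zpow_sub_of_ge {α : ℝ} (hα : 1 ≤ α) {a b : ℕ} (h : b ≤ a) :
    min 1 (α ^ ((a : ℤ) - b)) = 1 :=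
  min_eq_left <| one_le_zpow₀ hα (by omega)

/-- `n` times the contribution of bit `j` to the expected one-step change of `HLB_δ`. -/
noncomputable def flipDrift (n : ℕ) (α δ : ℝ) (x : ℕ → Bool) (j : ℕ) : ℝ :=
  min 1 (α ^ ((DLBn n (Function.update x j (!x j)) : ℤ) - DLBn n x)) *
    (HLBn n δ (Function.update x j (!x j)) - HLBn n δ x)

section FlipDrift

variable {n m j : ℕ} {α δ : ℝ} {x : ℕ → Bool}

lemma flipDrift_of_lt (he : Even n) (hα : 1 ≤ α) (hm : 2 * m + 1 < n)
    (hpre : ∀ s < 2 * m, x s = true) (hj : j < 2 * m) :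
    flipDrift n α δ x j =
      α ^ (2 * (j / 2)) / α ^ DLBn n x * (2 * (j / 2 : ℕ) + 2 - δ - HLBn n δ x) := by
  have hm' : 2 * (j / 2) + 1 < n := by omega
  have hpre' : ∀ s < 2 * (j / 2), Function.update x j (!x j) s = true := fun s hs => by
    rw [Function.update_of_ne (by omega)]; exact hpre s (by omega)
  have hne : Function.update x j (!x j) (2 * (j / 2)) ≠
      Function.update x j (!x j) (2 * (j / 2) + 1) := by
    obtain ⟨k, rfl | rfl⟩ := Nat.even_or_odd' j
    · simp [show 2 * k / 2 = k by omega, hpre (2 * k) hj, hpre (2 * k + 1) (by omega)]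
    · simp [show (2 * k + 1) / 2 = k by omega, hpre (2 * k) (by omega),
        hpre (2 * k + 1) hj]
  have hle : 2 * (j / 2) ≤ DLBn n x := (two_mul_le_DLBn he (by omega) hpre).trans' (by omega)
  rw [flipDrift, DLBn_of_block_mixed hm' hpre' hne, HLBn_of_block_mixed hm' hpre' hne,
    min_one_zpow_sub_of_le hα hle]

lemma flipDrift_of_block_00 (hα : 1 ≤ α) (hm : 2 * m + 1 < n) (hpre : ∀ s < 2 * m, x s = true)
    (h0 : x (2 * m) = false) (h1 : x (2 * m + 1) = false) (hj : j / 2 = m) :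
    flipDrift n α δ x j = (2 - δ) / α := by
  have hpre' : ∀ s < 2 * m, Function.update x j (!x j) s = true := fun s hs => by
    rw [Function.update_of_ne (by omega)]; exact hpre s hs
  have hne : Function.update x j (!x j) (2 * m) ≠ Function.update x j (!x j) (2 * m + 1) := by
    obtain rfl | rfl : j = 2 * m ∨ j = 2 * m + 1 := by omega
    all_goals simp [h0, h1]
  rw [flipDrift, DLBn_of_block_mixed hm hpre' hne, HLBn_of_block_mixed hm hpre' hne,
    DLBn_of_block_00 hm hpre h0 h1, HLBn_of_block_00 hm hpre h0 h1,
    min_one_zpow_sub_of_le hα (by omega), pow_succ]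
  field_simp
  ring

lemma flipDrift_of_block_mixed_of_true (hα : 1 ≤ α) (hm : 2 * m + 1 < n)
    (hpre : ∀ s < 2 * m, x s = true) (hne : x (2 * m) ≠ x (2 * m + 1)) (hj : j / 2 = m)
    (hxj : x j = true) : flipDrift n α δ x j = δ - 2 := by
  have hpre' : ∀ s < 2 * m, Function.update x j (!x j) s = true := fun s hs => by
    rw [Function.update_of_ne (by omega)]; exact hpre s hs
  have h00 : Function.update x j (!x j) (2 * m) = false ∧
      Function.update x j (!x j) (2 * m + 1) = false := by
    obtain rfl | rfl : j = 2 * m ∨ j = 2 * m + 1 := by omega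
    all_goals simp_all
  rw [flipDrift, DLBn_of_block_00 hm hpre' h00.1 h00.2, HLBn_of_block_00 hm hpre' h00.1 h00.2,
    DLBn_of_block_mixed hm hpre hne, HLBn_of_block_mixed hm hpre hne,
    min_one_zpow_sub_of_ge hα (by omega)]
  ring

lemma le_flipDrift_of_block_mixed_of_false (he : Even n) (hα : 1 ≤ α) (hδ : δ ≤ 2)
    (hm : 2 * m + 1 < n) (hpre : ∀ s < 2 * m, x s = true) (hne : x (2 * m) ≠ x (2 * m + 1))
    (hj : j / 2 = m) (hxj : x j = false) : δ ≤ flipDrift n α δ x j := by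
  have hm' : 2 * (m + 1) ≤ n := by obtain ⟨c, rfl⟩ := he; omega
  have hpre' : ∀ s < 2 * (m + 1), Function.update x j (!x j) s = true := fun s hs => by
    rcases eq_or_ne s j with rfl | hsj
    · simp [hxj]
    rw [Function.update_of_ne hsj]
    rcases (show s < 2 * m ∨ s = 2 * m ∨ s = 2 * m + 1 by omega) with hs | rfl | rfl
    · exact hpre s hs
    all_goals obtain rfl | rfl : j = 2 * m ∨ j = 2 * m + 1 := by omega
    all_goals simp_all
  have hD := two_mul_le_DLBn he hm' hpre'
  have hH := two_mul_le_HLBn he hδ hm' hpre'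
  rw [flipDrift, DLBn_of_block_mixed hm hpre hne, HLBn_of_block_mixed hm hpre hne,
    min_one_zpow_sub_of_ge hα (by omega), one_mul]
  push_cast at hH
  linarith

lemma two_mul_sub_two_le_flipDrift_add (he : Even n) (hα : 1 ≤ α) (hδ : δ ≤ 2)
    (hm : 2 * m + 1 < n) (hpre : ∀ s < 2 * m, x s = true) (hne : x (2 * m) ≠ x (2 * m + 1)) :
    2 * δ - 2 ≤ flipDrift n α δ x (2 * m) + flipDrift n α δ x (2 * m + 1) := by
  have h0 : (2 * m) / 2 = m := by omega
  have h1 : (2 * m + 1) / 2 = m := by omega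
  cases hx : x (2 * m)
  · have hx1 : x (2 * m + 1) = true := by simpa [hx] using hne.symm
    have := le_flipDrift_of_block_mixed_of_false he hα hδ hm hpre hne h0 hx
    rw [flipDrift_of_block_mixed_of_true hα hm hpre hne h1 hx1]
    linarith
  · have hx1 : x (2 * m + 1) = false := by simpa [hx] using hne
    have := le_flipDrift_of_block_mixed_of_false he hα hδ hm hpre hne h1 hx1
    rw [flipDrift_of_block_mixed_of_true hα hm hpre hne h0 hx]
    linarith

lemma flipDrift_eq_zero_of_le (hm : 2 * m + 1 < n) (hpre : ∀ s < 2 * m, x s = true)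
    (hblk : x (2 * m) = false ∨ x (2 * m + 1) = false) (hj : 2 * m + 2 ≤ j) :
    flipDrift n α δ x j = 0 := by
  rw [flipDrift,
    HLBn_congr_of_block hm hpre hblk fun s hs => Function.update_of_ne (by omega) _ _,
    sub_self, mul_zero]

end FlipDrift

lemma Finset.sum_range_two_mul_div_two {M : Type*} [AddCommMonoid M] (f : ℕ → M) (m : ℕ) :
    ∑ j ∈ Finset.range (2 * m), f (j / 2) = 2 • ∑ k ∈ Finset.range m, f k := by
  induction m with
  | zero => simp
  | succ m ih =>
    rw [show 2 * (m + 1) = 2 * m + 1 + 1 by ring, Finset.sum_range_succ, Finset.sum_range_succ,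
      ih, Finset.sum_range_succ, show (2 * m + 1) / 2 = m by omega,
      show 2 * m / 2 = m by omega, smul_add, two_nsmul (f m), add_assoc]

lemma sum_pow_div_pow_mul_le {α a b : ℝ} (hα : 1 < α) (ha : 0 ≤ a) (hb : 0 ≤ b) (m : ℕ) :
    ∑ k ∈ Finset.range m, α ^ (2 * k) / α ^ (2 * m) * (a * ((m : ℝ) - 1 - k) + b)
      ≤ a / (α ^ 2 - 1) ^ 2 + b / (α ^ 2 - 1) := by
  set r := (α ^ 2)⁻¹ with hr
  have hα2 : 1 < α ^ 2 := one_lt_pow₀ hα two_ne_zero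
  have hr0 : 0 ≤ r := by positivity
  have hr1 : r < 1 := inv_lt_one_of_one_lt₀ hα2
  have hterm : ∀ j ∈ Finset.range m, α ^ (2 * (m - 1 - j)) / α ^ (2 * m) *
      (a * ((m : ℝ) - 1 - (m - 1 - j : ℕ)) + b) = r ^ (j + 1) * (a * j + b) := by
    intro j hj
    have hjm := Finset.mem_range.1 hj
    rw [Nat.cast_sub (by omega), Nat.cast_sub (by omega),
      show 2 * m = 2 * (m - 1 - j) + 2 * (j + 1) by omega, pow_add, hr, inv_pow, ← pow_mul]
    field_simp
    push_cast
    ring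
  have hsum : HasSum (fun j : ℕ => r ^ (j + 1) * (a * j + b))
      (r * (a * (r / (1 - r) ^ 2) + b * (1 - r)⁻¹)) := by
    have h1 := hasSum_coe_mul_geometric_of_norm_lt_one (by rwa [Real.norm_of_nonneg hr0])
    have h2 := hasSum_geometric_of_lt_one hr0 hr1
    rw [show (fun j : ℕ => r ^ (j + 1) * (a * j + b)) =
        fun j : ℕ => r * (a * (j * r ^ j) + b * r ^ j) from funext fun j => by ring]
    exact ((h1.mul_left a).add (h2.mul_left b)).mul_left r
  rw [← Finset.sum_range_reflect, Finset.sum_congr rfl hterm]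
  refine (sum_le_hasSum _ (fun j _ => by positivity) hsum).trans_eq ?_
  rw [hr]
  field_simp

section Drift

variable {n m : ℕ} {α δ : ℝ} {x : ℕ → Bool}

lemma sum_flipDrift_eq (he : Even n) (hα : 1 ≤ α) (hm : 2 * m + 1 < n)
    (hpre : ∀ s < 2 * m, x s = true) (hblk : x (2 * m) = false ∨ x (2 * m + 1) = false) :
    ∑ j ∈ Finset.range n, flipDrift n α δ x j =
      2 * ∑ k ∈ Finset.range m, α ^ (2 * k) / α ^ DLBn n x * (2 * k + 2 - δ - HLBn n δ x)
        + flipDrift n α δ x (2 * m) + flipDrift n α δ x (2 * m + 1) := by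
  have hn : 2 * m + 2 ≤ n := by obtain ⟨c, rfl⟩ := he; omega
  rw [← Finset.sum_range_add_sum_Ico _ hn,
    Finset.sum_eq_zero fun j hj => flipDrift_eq_zero_of_le hm hpre hblk (Finset.mem_Ico.1 hj).1,
    add_zero, Finset.sum_range_succ, Finset.sum_range_succ,
    Finset.sum_congr rfl fun j hj => flipDrift_of_lt he hα hm hpre (Finset.mem_range.1 hj),
    Finset.sum_range_two_mul_div_two
      (fun k => α ^ (2 * k) / α ^ DLBn n x * (2 * (k : ℝ) + 2 - δ - HLBn n δ x)),
    nsmul_eq_mul, Nat.cast_ofNat]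

lemma le_sum_flipDrift_of_block_00 (he : Even n) (hα : 1 < α) (hδ : 0 ≤ δ)
    (hm : 2 * m + 1 < n) (hpre : ∀ s < 2 * m, x s = true) (h0 : x (2 * m) = false)
    (h1 : x (2 * m + 1) = false) :
    2 * (2 - δ) / α - 2 / α * (2 / (α ^ 2 - 1) ^ 2 + δ / (α ^ 2 - 1))
      ≤ ∑ j ∈ Finset.range n, flipDrift n α δ x j := by
  have hlead : ∀ k ∈ Finset.range m, α ^ (2 * k) / α ^ (2 * m + 1) * (2 * k + 2 - δ - 2 * m)
      = -(1 / α) * (α ^ (2 * k) / α ^ (2 * m) * (2 * ((m : ℝ) - 1 - k) + δ)) := by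
    intro k _
    rw [pow_succ]
    field_simp
    ring
  have hgeom := sum_pow_div_pow_mul_le hα zero_le_two hδ m
  rw [sum_flipDrift_eq he hα.le hm hpre (.inl h0), DLBn_of_block_00 hm hpre h0 h1,
    HLBn_of_block_00 hm hpre h0 h1, flipDrift_of_block_00 hα.le hm hpre h0 h1 (by omega),
    flipDrift_of_block_00 hα.le hm hpre h0 h1 (by omega), Finset.sum_congr rfl hlead,
    ← Finset.mul_sum]
  have hα0 : 0 < α := by linarith
  have := mul_le_mul_of_nonneg_left hgeom (by positivity : 0 ≤ 2 / α)
  field_simp at this ⊢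
  linarith

lemma le_sum_flipDrift_of_block_mixed (he : Even n) (hα : 1 < α) (hδ : δ ≤ 2)
    (hm : 2 * m + 1 < n) (hpre : ∀ s < 2 * m, x s = true) (hne : x (2 * m) ≠ x (2 * m + 1)) :
    2 * δ - 2 - 2 * (2 / (α ^ 2 - 1) ^ 2 + 2 / (α ^ 2 - 1))
      ≤ ∑ j ∈ Finset.range n, flipDrift n α δ x j := by
  have hlead : ∀ k ∈ Finset.range m,
      α ^ (2 * k) / α ^ (2 * m) * (2 * k + 2 - δ - (2 * m + 2 - δ))
      = -(α ^ (2 * k) / α ^ (2 * m) * (2 * ((m : ℝ) - 1 - k) + 2)) := fun k _ => by ring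
  have hgeom := sum_pow_div_pow_mul_le hα zero_le_two zero_le_two m
  have hcrit := two_mul_sub_two_le_flipDrift_add he hα.le hδ hm hpre hne
  rw [sum_flipDrift_eq he hα.le hm hpre (Bool.eq_false_or_eq_false_of_ne hne),
    DLBn_of_block_mixed hm hpre hne, HLBn_of_block_mixed hm hpre hne,
    Finset.sum_congr rfl hlead, Finset.sum_neg_distrib]
  linarith

end Drift

/-- The constant `C(α)` of the runtime bound. -/
noncomputable def driftConst (α : ℝ) : ℝ := (α ^ 4 - 6 * α ^ 2 + 1) / (α * (α ^ 2 - 1) ^ 2)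

/-- The parameter `δ` of the potential `HLB_δ`; it makes the drift from a `00` critical block
exactly `C(α)`. -/
noncomputable def hlbParam (α : ℝ) : ℝ := (3 * α ^ 2 + 1) / (2 * α ^ 2)

section DriftConst

variable {α : ℝ}

lemma sq_sub_two_mul_sub_one_pos (hα : √2 + 1 < α) : 0 < α ^ 2 - 2 * α - 1 := by
  have hs : √2 ^ 2 = 2 := Real.sq_sqrt zero_le_two
  nlinarith [Real.sqrt_nonneg 2]

lemma hlbParam_nonneg : 0 ≤ hlbParam α := by
  unfold hlbParam
  positivity

lemma hlbParam_le_two (hα : 1 ≤ α) : hlbParam α ≤ 2 := by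
  unfold hlbParam
  rw [div_le_iff₀ (by positivity)]
  nlinarith

lemma driftConst_pos (hα : √2 + 1 < α) : 0 < driftConst α := by
  have hq := sq_sub_two_mul_sub_one_pos hα
  have hα2 : 2 < α := by linarith [Real.one_lt_sqrt_two]
  have hD : 0 < α ^ 2 - 1 := by nlinarith
  -- `α⁴ - 6α² + 1 = (α² - 2α - 1)(α² + 2α - 1)`
  have hN : 0 < α ^ 4 - 6 * α ^ 2 + 1 := by
    nlinarith [mul_pos hq (by nlinarith : 0 < α ^ 2 + 2 * α - 1)]
  unfold driftConst
  positivity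

lemma driftConst_eq_drift_00 (hα : 1 < α) :
    driftConst α = 2 * (2 - hlbParam α) / α
      - 2 / α * (2 / (α ^ 2 - 1) ^ 2 + hlbParam α / (α ^ 2 - 1)) := by
  have hα0 : α ≠ 0 := by positivity
  have hD : α ^ 2 - 1 ≠ 0 := by nlinarith
  unfold driftConst hlbParam
  field_simp
  ring

lemma driftConst_le_drift_mixed (hα : √2 + 1 < α) :
    driftConst α ≤ 2 * hlbParam α - 2 - 2 * (2 / (α ^ 2 - 1) ^ 2 + 2 / (α ^ 2 - 1)) := by
  have hq := sq_sub_two_mul_sub_one_pos hα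
  have hα2 : 2 < α := by linarith [Real.one_lt_sqrt_two]
  have hD : 0 < α ^ 2 - 1 := by nlinarith
  -- this sextic is `(α² - 2α - 1)(α⁴ + α³ - 2α² + 3α + 3) + 8α + 4`
  have hP : 0 ≤ α ^ 6 - α ^ 5 - 5 * α ^ 4 + 6 * α ^ 3 - α ^ 2 - α + 1 := by
    nlinarith [mul_nonneg hq.le (by nlinarith : 0 ≤ α ^ 4 + α ^ 3 - 2 * α ^ 2 + 3 * α + 3)]
  unfold driftConst hlbParam
  rw [div_le_iff₀ (by positivity)]
  field_simp
  nlinarith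

end DriftConst

lemma driftConst_le_sum_flipDrift {n : ℕ} {α : ℝ} (he : Even n) (hα : √2 + 1 < α)
    {x : ℕ → Bool} (hx : ¬ ∀ i < n, x i = true) :
    driftConst α ≤ ∑ j ∈ Finset.range n, flipDrift n α (hlbParam α) x j := by
  have hα1 : 1 < α := by linarith [Real.sqrt_nonneg 2]
  obtain ⟨m, hm, hpre, hblk⟩ := exists_block he hx
  rcases Bool.eq_false_and_eq_false_or_ne hblk with ⟨h0, h1⟩ | hne
  · rw [driftConst_eq_drift_00 hα1]
    exact le_sum_flipDrift_of_block_00 he hα1 hlbParam_nonneg hm hpre h0 h1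
  · exact (driftConst_le_drift_mixed hα).trans
      (le_sum_flipDrift_of_block_mixed he hα1 (hlbParam_le_two hα1.le) hm hpre hne)

section BitStrings

variable {n : ℕ}

lemma toNatFun_apply (x : Fin n → Bool) (i : Fin n) : toNatFun x i = x i := by
  simp [toNatFun]

lemma toNatFun_update (x : Fin n → Bool) (i : Fin n) (b : Bool) :
    toNatFun (Function.update x i b) = Function.update (toNatFun x) i b := by
  funext j
  by_cases hj : j < n
  · simp [toNatFun, hj, Function.update_apply, Fin.ext_iff]
  · simp [toNatFun, hj, Function.update_of_ne (show j ≠ i by omega)]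

lemma eq_allOnes_iff (x : Fin n → Bool) :
    x = (fun _ => true) ↔ ∀ i < n, toNatFun x i = true := by
  simp only [funext_iff, toNatFun, Fin.forall_iff]
  exact forall₂_congr fun i hi => by simp [hi]

lemma sum_fin_eq_sum_flipDrift (α δ : ℝ) (x : Fin n → Bool) :
    ∑ i : Fin n, min 1 (α ^ ((DLB (Function.update x i (!x i)) : ℤ) - DLB x)) *
        (HLB δ (Function.update x i (!x i)) - HLB δ x)
      = ∑ j ∈ Finset.range n, flipDrift n α δ (toNatFun x) j := by
  rw [← Fin.sum_univ_eq_sum_range]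
  refine Finset.sum_congr rfl fun i _ => ?_
  simp only [flipDrift, DLB, HLB, toNatFun_update, toNatFun_apply]

end BitStrings

lemma expect_metroStep {n : ℕ} [NeZero n] {α : ℝ} (hα : 0 ≤ α) (x : Fin n → Bool)
    (g : (Fin n → Bool) → ℝ) :
    (metroStep n α x).expect g = g x + (∑ i : Fin n,
      min 1 (α ^ ((DLB (Function.update x i (!x i)) : ℤ) - DLB x)) *
        (g (Function.update x i (!x i)) - g x)) / n := by
  have hn : (n : ℝ) ≠ 0 := Nat.cast_ne_zero.2 (NeZero.ne n)
  calc (metroStep n α x).expect g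
      = ∑ i : Fin n, (g x + min 1 (α ^ ((DLB (Function.update x i (!x i)) : ℤ) - DLB x)) *
          (g (Function.update x i (!x i)) - g x)) / n := by
        rw [metroStep, PMF.expect_bind]
        refine Finset.sum_congr rfl fun i _ => ?_
        rw [PMF.expect_bernoulli_bind_ite, PMF.uniformOfFintype_apply, Fintype.card_fin,
          Real.coe_toNNReal _ (le_min zero_le_one (by positivity)), ENNReal.toReal_inv,
          ENNReal.toReal_natCast]
        field_simp
        ring
    _ = _ := by
        rw [← Finset.sum_div, Finset.sum_add_distrib, Finset.sum_const, Finset.card_univ,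
          Fintype.card_fin, nsmul_eq_mul, add_div, mul_div_cancel_left₀ _ hn]

lemma expect_metroStep_add_driftConst_le {n : ℕ} [NeZero n] {α : ℝ} (he : Even n)
    (hα : √2 + 1 < α) (x : Fin n → Bool) (hx : x ≠ fun _ => true) :
    (metroStep n α x).expect (fun z => n - HLB (hlbParam α) z)
      + driftConst α / n ≤ n - HLB (hlbParam α) x := by
  have hn : (0 : ℝ) < n := Nat.cast_pos.2 (NeZero.pos n)
  have hdrift := driftConst_le_sum_flipDrift he hα (x := toNatFun x)
    (by rwa [← eq_allOnes_iff])
  rw [expect_metroStep (by linarith [Real.sqrt_nonneg 2])]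
  have hsum : ∑ i : Fin n, min 1 (α ^ ((DLB (Function.update x i (!x i)) : ℤ) - DLB x)) *
      ((n - HLB (hlbParam α) (Function.update x i (!x i)))
        - (n - HLB (hlbParam α) x))
      = -∑ j ∈ Finset.range n, flipDrift n α (hlbParam α) (toNatFun x) j := by
    rw [← sum_fin_eq_sum_flipDrift, ← Finset.sum_neg_distrib]
    exact Finset.sum_congr rfl fun i _ => by ring
  rw [hsum, neg_div]
  linarith [div_le_div_of_nonneg_right hdrift hn.le]

/-- The expected hitting time is `∑_{t ≥ 0} Pr[T > t]`, computed for the chain absorbed at the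
optimum, which has the same hitting time. -/
theorem metropolis_runtime_on_DLB (n : ℕ) [NeZero n] (he : Even n)
    (α : ℝ) (hα : Real.sqrt 2 + 1 < α) (x0 : Fin n → Bool) :
    0 < (α ^ 4 - 6 * α ^ 2 + 1) / (α * (α ^ 2 - 1) ^ 2) ∧
    ∑' t : ℕ,
        (1 - iterStep
          (fun x => if x = (fun _ => true) then PMF.pure x else metroStep n α x)
          t x0 (fun _ => true))
      ≤ ENNReal.ofReal
          ((n : ℝ) ^ 2 / ((α ^ 4 - 6 * α ^ 2 + 1) / (α * (α ^ 2 - 1) ^ 2))) := by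
  change 0 < driftConst α ∧ _ ≤ ENNReal.ofReal (_ / driftConst α)
  have hα1 : 1 ≤ α := by linarith [Real.sqrt_nonneg 2]
  have hC := driftConst_pos hα
  have hn : (0 : ℝ) < n := Nat.cast_pos.2 (NeZero.pos n)
  have hHLB : ∀ z : Fin n → Bool, 0 ≤ HLB (hlbParam α) z ∧ HLB (hlbParam α) z ≤ n :=
    fun z => ⟨HLBn_nonneg he (hlbParam_le_two hα1), HLBn_le he hlbParam_nonneg⟩
  refine ⟨hC, ?_⟩
  calc _ ≤ ENNReal.ofReal ((n - HLB (hlbParam α) x0) / (driftConst α / n)) :=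
        tsum_one_sub_iterStep_le_of_drift (g := fun z => n - HLB (hlbParam α) z) (div_pos hC hn)
          (fun z => sub_nonneg.2 (hHLB z).2) (by simp [PMF.expect_pure])
          (fun x hx => by rw [if_neg hx]; exact expect_metroStep_add_driftConst_le he hα x hx) x0
    _ ≤ _ := by
        refine ENNReal.ofReal_le_ofReal ?_
        rw [div_div_eq_mul_div]
        exact div_le_div_of_nonneg_right (by nlinarith [hHLB x0]) hC.le
end

section
/- Binomial coefficient inequality underlying the even-DLB-value drift bound: Let n ≥ 2 and m be integers with n/4 ≤ m ≤ n/2 − 1. Then for every integer r with 1 ≤ r ≤ n, one has n·C(n−2m−2, r−1) ≤ C(n, r), where C(a,b) denotes the binomial coefficient 'a choose b' (equal to 0 when b > a). -/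
/-!
After dividing by `n / r`, the claim reads `r · C(k, r-1) ≤ C(n-1, r-1)` with
`k = n - 2m - 2`, and `n ≤ 4m` gives `2k ≤ n - 1`. By Vandermonde, `C(2k, s)` is a sum of
`s + 1` products `C(k, i) · C(k, s - i)`, each of which is at least
`C(k, i) · C(k - i, s - i) = C(k, s) · C(s, i) ≥ C(k, s)`.
-/

open Finset

lemma Nat.choose_le_choose_mul_choose_of_add_eq {k i j s : ℕ} (hs : i + j = s) :
    k.choose s ≤ k.choose i * k.choose j := by
  rcases le_or_gt s k with hsk | hks
  · calc k.choose s
        ≤ k.choose s * s.choose i := Nat.le_mul_of_pos_right _ (Nat.choose_pos (by omega))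
      _ = k.choose i * (k - i).choose (s - i) := Nat.choose_mul (by omega)
      _ ≤ k.choose i * k.choose j := by
          rw [← hs, Nat.add_sub_cancel_left]
          gcongr
          exact Nat.sub_le k i
  · simp [Nat.choose_eq_zero_of_lt hks]

lemma Nat.succ_mul_choose_le_choose_two_mul (k s : ℕ) :
    (s + 1) * k.choose s ≤ (2 * k).choose s := by
  rw [two_mul, Nat.add_choose_eq, ← Nat.card_antidiagonal s, ← smul_eq_mul]
  exact card_nsmul_le_sum _ _ _ fun ij hij =>
    Nat.choose_le_choose_mul_choose_of_add_eq (mem_antidiagonal.mp hij)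

lemma Nat.mul_choose_le_choose_succ {n k : ℕ} (h : 2 * k + 1 ≤ n) (s : ℕ) :
    n * k.choose s ≤ n.choose (s + 1) := by
  obtain ⟨n, rfl⟩ : ∃ n', n = n' + 1 := ⟨n - 1, by omega⟩
  have hk : 2 * k ≤ n := by omega
  refine Nat.le_of_mul_le_mul_left ?_ s.succ_pos
  calc (s + 1) * ((n + 1) * k.choose s)
      = (n + 1) * ((s + 1) * k.choose s) := by ring
    _ ≤ (n + 1) * n.choose s := by
        gcongr
        exact (Nat.succ_mul_choose_le_choose_two_mul k s).trans (Nat.choose_le_choose s hk)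
    _ = (s + 1) * (n + 1).choose (s + 1) := by rw [Nat.add_one_mul_choose_eq, mul_comm]

theorem binom_ineq_even_case_general (n m : ℕ)
    (hm1 : n ≤ 4 * m) :
    ∀ r : ℕ, 1 ≤ r → r ≤ n →
      n * Nat.choose (n - 2 * m - 2) (r - 1) ≤ Nat.choose n r := by
  intro r hr hrn
  obtain ⟨s, rfl⟩ : ∃ s, r = s + 1 := ⟨r - 1, by omega⟩
  exact Nat.mul_choose_le_choose_succ (by omega) s

/-- **Binomial coefficient inequality underlying the even-DLB-value drift
bound.** Let `n ≥ 2` and `m` be integers with `n/4 ≤ m ≤ n/2 - 1` (equivalently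
`n ≤ 4m` and `2m + 2 ≤ n`). Then for every integer `r` with `1 ≤ r ≤ n`,
`n · C(n - 2m - 2, r - 1) ≤ C(n, r)`; equivalently, the probability
`D_r = C(n-2m-2, r-1)/C(n,r)` is at most `D_1 = 1/n`. -/
theorem binom_ineq_even_case (n m : ℕ) (hn : 2 ≤ n)
    (hm1 : n ≤ 4 * m) (hm2 : 2 * m + 2 ≤ n) :
    ∀ r : ℕ, 1 ≤ r → r ≤ n →
      n * Nat.choose (n - 2 * m - 2) (r - 1) ≤ Nat.choose n r :=
  binom_ineq_even_case_general n m hm1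
end

section
/- Binomial coefficient inequality underlying the local-optimum drift bound: Let n ≥ 2 and m be integers with n ≤ 3m and m ≤ n/2 − 1. Then for every integer r with 2 ≤ r ≤ n − 2m, one has C(n,2)·C(n−2m−2, r−2) ≤ C(n, r), where C(a,b) denotes the binomial coefficient 'a choose b' (equal to 0 when b > a). -/
/-! Induct on `s`: passing from `s` to `s + 1` multiplies the left side by `(k - s) / (s + 1)`
and the right side by `(n - s - 2) / (s + 3)`, and `n ≥ 3k + 2` makes the second factor the
larger one. -/

lemma sub_mul_add_three_le_sub_mul_add_one {n k : ℕ} (h : 3 * k + 2 ≤ n) (s : ℕ) :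
    (k - s) * (s + 3) ≤ (n - (s + 2)) * (s + 1) := by
  rcases le_or_gt k s with hks | hsk
  · simp [Nat.sub_eq_zero_of_le hks]
  · obtain ⟨t, rfl⟩ := Nat.exists_eq_add_of_lt hsk
    obtain ⟨d, rfl⟩ := Nat.exists_eq_add_of_le h
    rw [show s + t + 1 - s = t + 1 by omega, show 3 * (s + t + 1) + 2 + d - (s + 2) =
      2 * s + 3 * t + 3 + d by omega]
    nlinarith

lemma choose_two_mul_choose_le_choose_add_two {n k : ℕ} (h : 3 * k + 2 ≤ n) (s : ℕ) :
    n.choose 2 * k.choose s ≤ n.choose (s + 2) := by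
  induction s with
  | zero => simp
  | succ s ih =>
    refine Nat.le_of_mul_le_mul_right ?_ (by positivity : 0 < (s + 1) * (s + 3))
    calc n.choose 2 * k.choose (s + 1) * ((s + 1) * (s + 3))
        = n.choose 2 * (k.choose (s + 1) * (s + 1)) * (s + 3) := by ring
      _ = n.choose 2 * k.choose s * ((k - s) * (s + 3)) := by
        rw [Nat.choose_succ_right_eq]; ring
      _ ≤ n.choose (s + 2) * ((n - (s + 2)) * (s + 1)) :=
        Nat.mul_le_mul ih (sub_mul_add_three_le_sub_mul_add_one h s)
      _ = n.choose (s + 2 + 1) * (s + 2 + 1) * (s + 1) := by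
        rw [Nat.choose_succ_right_eq]; ring
      _ = n.choose (s + 1 + 2) * ((s + 1) * (s + 3)) := by ring

theorem binom_ineq_local_opt_case_general (n m : ℕ)
    (hm1 : n ≤ 3 * m) (hm2 : 2 * m + 2 ≤ n) :
    ∀ r : ℕ, 2 ≤ r → r ≤ n - 2 * m →
      Nat.choose n 2 * Nat.choose (n - 2 * m - 2) (r - 2) ≤ Nat.choose n r := by
  intro r hr _
  obtain ⟨s, rfl⟩ := Nat.exists_eq_add_of_le' hr
  simpa using choose_two_mul_choose_le_choose_add_two (k := n - 2 * m - 2) (by omega) s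

/-- **Binomial coefficient inequality underlying the local-optimum drift
bound.** Let `n ≥ 2` and `m` be integers with `n ≤ 3m` and `m ≤ n/2 - 1`
(equivalently `2m + 2 ≤ n`). Then for every integer `r` with `2 ≤ r ≤ n - 2m`,
`C(n,2) · C(n - 2m - 2, r - 2) ≤ C(n, r)`; equivalently, the probability
`E_r = C(n-2m-2, r-2)/C(n,r)` is at most `E_2 = 1/C(n,2)`. -/
theorem binom_ineq_local_opt_case (n m : ℕ) (hn : 2 ≤ n)
    (hm1 : n ≤ 3 * m) (hm2 : 2 * m + 2 ≤ n) :
    ∀ r : ℕ, 2 ≤ r → r ≤ n - 2 * m →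
      Nat.choose n 2 * Nat.choose (n - 2 * m - 2) (r - 2) ≤ Nat.choose n r :=
  binom_ineq_local_opt_case_general n m hm1 hm2
end

section
/- Binomial coefficient inequality underlying the unary unbiased lower bound: Let n be an even positive integer and m an integer with n/4 < m < n/3. Let ℓ and r be integers with 1 ≤ ℓ ≤ 2m+1 and 2m+2−ℓ ≤ r ≤ n−ℓ. Then n·C(n−2m−2, r−(2m+2−ℓ)) ≤ 2·C(n, r), where C(a,b) denotes the binomial coefficient 'a choose b'. -/
/-!
The `2m + 2` prescribed positions and the remaining `n - 2m - 2` ones split `C(n, r)`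
by Vandermonde's identity, so `C(2m + 2, k) · C(n - 2m - 2, r - k) ≤ C(n, r)` with
`k = 2m + 2 - ℓ`. Since `0 < k < 2m + 2`, the first factor is at least `2m + 2 ≥ n / 2`.
-/

namespace Nat

theorem choose_mul_choose_le_choose_add (a b i j : ℕ) :
    a.choose i * b.choose j ≤ (a + b).choose (i + j) := by
  rw [Nat.add_choose_eq]
  exact Finset.single_le_sum (f := fun p : ℕ × ℕ => a.choose p.1 * b.choose p.2)
    (a := (i, j)) (fun _ _ => Nat.zero_le _) (Finset.HasAntidiagonal.mem_antidiagonal.mpr rfl)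

theorem self_le_choose : ∀ {n k : ℕ}, 0 < k → k < n → n ≤ n.choose k
  | 0, _, _, hkn => absurd hkn (Nat.not_lt_zero _)
  | _, 0, hk, _ => absurd hk (lt_irrefl 0)
  | n + 1, j + 1, _, hkn => by
    rw [Nat.choose_succ_succ']
    rcases Nat.lt_or_eq_of_le (Nat.le_of_lt_succ hkn) with hlt | rfl
    · have h_inner : n ≤ n.choose (j + 1) := self_le_choose (Nat.succ_pos j) hlt
      have h_pos : 0 < n.choose j := Nat.choose_pos (by omega)
      omega
    · simp [Nat.choose_succ_self_right]

end Nat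

theorem binom_ineq_unary_lower_bound_general (n m : ℕ)
    (hm1 : n < 4 * m) (hm2 : 3 * m < n)
    (ℓ r : ℕ) (hℓ1 : 1 ≤ ℓ) (hℓ2 : ℓ ≤ 2 * m + 1)
    (hr1 : 2 * m + 2 - ℓ ≤ r) :
    n * Nat.choose (n - 2 * m - 2) (r - (2 * m + 2 - ℓ)) ≤ 2 * Nat.choose n r := by
  set k := 2 * m + 2 - ℓ
  have h_block : n ≤ 2 * (2 * m + 2).choose k := by
    have := Nat.self_le_choose (n := 2 * m + 2) (k := k) (by omega) (by omega)
    omega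
  calc n * (n - 2 * m - 2).choose (r - k)
      ≤ 2 * (2 * m + 2).choose k * (n - 2 * m - 2).choose (r - k) := by gcongr
    _ = 2 * ((2 * m + 2).choose k * (n - 2 * m - 2).choose (r - k)) := Nat.mul_assoc ..
    _ ≤ 2 * (2 * m + 2 + (n - 2 * m - 2)).choose (k + (r - k)) := by
      gcongr; exact Nat.choose_mul_choose_le_choose_add ..
    _ = 2 * n.choose r := by congr 2 <;> omega

/-- **Binomial coefficient inequality underlying the unary unbiased lower
bound.** Let `n` be an even positive integer and `m` an integer with
`n/4 < m < n/3` (equivalently `n < 4m` and `3m < n`). Let `ℓ` and `r` be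
integers with `1 ≤ ℓ ≤ 2m+1` and `2m+2-ℓ ≤ r ≤ n-ℓ`. Then
`n · C(n - 2m - 2, r - (2m + 2 - ℓ)) ≤ 2 · C(n, r)`; equivalently, the
probability `D_ℓ(r) = C(n-2m-2, r-(2m+2-ℓ))/C(n,r)` is at most `2/n`. -/
theorem binom_ineq_unary_lower_bound (n m : ℕ) (hn : 0 < n) (he : Even n)
    (hm1 : n < 4 * m) (hm2 : 3 * m < n)
    (ℓ r : ℕ) (hℓ1 : 1 ≤ ℓ) (hℓ2 : ℓ ≤ 2 * m + 1)
    (hr1 : 2 * m + 2 - ℓ ≤ r) (hr2 : r ≤ n - ℓ) :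
    n * Nat.choose (n - 2 * m - 2) (r - (2 * m + 2 - ℓ)) ≤ 2 * Nat.choose n r :=
  binom_ineq_unary_lower_bound_general n m hm1 hm2 ℓ r hℓ1 hℓ2 hr1
end
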